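/- arXiv:1404.3883 — 5 statements merged into one kernel-verified Lean document; each statement's English description precedes it below -/
import Mathlib

section
/- Let u be a nonnegative continuous function on [0,∞) and suppose there exist constants a, b ≥ 0 such that u(t) ≤ a + b ∫₀ᵗ u(s)/√(t−s) ds for every t ≥ 0. Then u(t) ≤ a(1 + 2b√t)·exp(π b² t) for all t ≥ 0. -/
/-!
Substituting the inequality into itself replaces the kernel `1/√(t - s)` by its
self-convolution, which is constant: `∫ₛ 1/√((s - r)(t - s)) ds = π` over `[r, t]`.
Hence `u t ≤ a + 2ab√t + πb² ∫₀ᵗ u`, and on `[0, T]` the classical integral Gronwall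
inequality with constant `a(1 + 2b√T)` and rate `πb²` gives the bound at `T`.
-/

open Real MeasureTheory Set Filter
open scoped ENNReal

theorem lintegral_Icc_ofReal_eq_sub_of_hasDerivAt_of_nonneg {g g' : ℝ → ℝ} {a b : ℝ}
    (hab : a ≤ b) (hcont : ContinuousOn g (Icc a b))
    (hderiv : ∀ x ∈ Ioo a b, HasDerivAt g (g' x) x) (hg' : ∀ x ∈ Ioo a b, 0 ≤ g' x) :
    ∫⁻ x in Icc a b, ENNReal.ofReal (g' x) = ENNReal.ofReal (g b - g a) := by
  have hint : IntegrableOn g' (Ioc a b) :=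
    intervalIntegral.integrableOn_deriv_of_nonneg hcont hderiv hg'
  rw [setLIntegral_congr Ioo_ae_eq_Icc.symm, ← ofReal_integral_eq_lintegral_ofReal
      (hint.mono_set Ioo_subset_Ioc_self) (ae_restrict_of_forall_mem measurableSet_Ioo hg'),
    ← integral_Ioc_eq_integral_Ioo, ← intervalIntegral.integral_of_le hab,
    intervalIntegral.integral_eq_sub_of_hasDerivAt_of_le hab hcont hderiv
      ((intervalIntegrable_iff_integrableOn_Ioc_of_le hab).mpr hint)]

theorem lintegral_one_div_sqrt_sub {c t : ℝ} (hct : c ≤ t) :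
    ∫⁻ s in Icc c t, ENNReal.ofReal (1 / √(t - s)) = ENNReal.ofReal (2 * √(t - c)) := by
  have hderiv : ∀ s ∈ Ioo c t, HasDerivAt (fun s => -2 * √(t - s)) (1 / √(t - s)) s := by
    intro s hs
    have hts : 0 < t - s := sub_pos.mpr hs.2
    refine ((((hasDerivAt_id' s).const_sub t).sqrt hts.ne').const_mul (-2)).congr_deriv ?_
    field_simp
  rw [lintegral_Icc_ofReal_eq_sub_of_hasDerivAt_of_nonneg hct (by fun_prop) hderiv
    (fun s _ => by positivity)]
  simp

theorem lintegral_one_div_sqrt_sub_mul_one_div_sqrt_sub {r t : ℝ} (hrt : r < t) :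
    ∫⁻ s in Icc r t, ENNReal.ofReal (1 / √(s - r)) * ENNReal.ofReal (1 / √(t - s))
      = ENNReal.ofReal π := by
  have hne : t - r ≠ 0 := by linarith
  have hderiv : ∀ s ∈ Ioo r t, HasDerivAt (fun s => arcsin ((2 * s - r - t) / (t - r)))
      (1 / √(s - r) * (1 / √(t - s))) s := by
    intro s hs
    have hsr : 0 < s - r := sub_pos.mpr hs.1
    have hts : 0 < t - s := sub_pos.mpr hs.2
    have hy : (2 * s - r - t) / (t - r) ∈ Ioo (-1) 1 := by
      constructor
      · rw [lt_div_iff₀ (by linarith)]; linarith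
      · rw [div_lt_iff₀ (by linarith)]; linarith
    have hsqrt :
        √(1 - ((2 * s - r - t) / (t - r)) ^ 2) = 2 * √(s - r) * √(t - s) / (t - r) := by
      rw [Real.sqrt_eq_iff_mul_self_eq_of_pos (by positivity)]
      field_simp
      rw [Real.sq_sqrt hsr.le, Real.sq_sqrt hts.le]
      ring
    have hlin := (((hasDerivAt_id' s).const_mul 2).sub_const r).sub_const t |>.div_const (t - r)
    refine ((Real.hasDerivAt_arcsin hy.1.ne' hy.2.ne).comp s hlin).congr_deriv ?_
    rw [hsqrt]
    field_simp
  rw [setLIntegral_congr_fun measurableSet_Icc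
      (fun s _ => (ENNReal.ofReal_mul (by positivity)).symm),
    lintegral_Icc_ofReal_eq_sub_of_hasDerivAt_of_nonneg hrt.le (by fun_prop) hderiv
      (fun s _ => by positivity)]
  simp [show (2 * t - r - t) / (t - r) = 1 by field_simp; ring,
    show (2 * r - r - t) / (t - r) = -1 by field_simp; ring]

theorem lintegral_Icc_lintegral_Icc_swap {F : ℝ → ℝ → ℝ≥0∞}
    (hF : Measurable (Function.uncurry F)) (a b : ℝ) :
    ∫⁻ s in Icc a b, ∫⁻ r in Icc a s, F s r
      = ∫⁻ r in Icc a b, ∫⁻ s in Icc r b, F s r := by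
  set H : ℝ → ℝ → ℝ≥0∞ := fun s r =>
    {p : ℝ × ℝ | p.2 ≤ p.1}.indicator (Function.uncurry F) (s, r)
  have hH : Measurable (Function.uncurry H) :=
    hF.indicator (measurableSet_le measurable_snd measurable_fst)
  have hleft : ∀ s ∈ Icc a b, ∫⁻ r in Icc a s, F s r = ∫⁻ r in Icc a b, H s r := by
    intro s hs
    have : H s = (Iic s).indicator (F s) := by ext r; simp [H, indicator]
    rw [this, lintegral_indicator measurableSet_Iic, Measure.restrict_restrict measurableSet_Iic,
      show Iic s ∩ Icc a b = Icc a s by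
        ext; simp only [mem_inter_iff, mem_Iic, mem_Icc]; grind [hs.2]]
  have hright : ∀ r ∈ Icc a b, ∫⁻ s in Icc r b, F s r = ∫⁻ s in Icc a b, H s r := by
    intro r hr
    have : (fun s => H s r) = (Ici r).indicator (fun s => F s r) := by ext s; simp [H, indicator]
    rw [this, lintegral_indicator measurableSet_Ici, Measure.restrict_restrict measurableSet_Ici,
      show Ici r ∩ Icc a b = Icc r b by
        ext; simp only [mem_inter_iff, mem_Ici, mem_Icc]; grind [hr.1]]
  rw [setLIntegral_congr_fun measurableSet_Icc hleft,
    setLIntegral_congr_fun measurableSet_Icc hright, lintegral_lintegral_swap hH.aemeasurable]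

/-- Valued in `ℝ≥0∞` so that iterating it needs only Tonelli, without integrability
conditions. -/
noncomputable def abelIntegral (f : ℝ → ℝ≥0∞) (t : ℝ) : ℝ≥0∞ :=
  ∫⁻ s in Icc 0 t, f s * ENNReal.ofReal (1 / √(t - s))

theorem abelIntegral_const_add_mul (c : ℝ≥0∞) {d : ℝ≥0∞} (hd : d ≠ ∞) (g : ℝ → ℝ≥0∞)
    {t : ℝ} (ht : 0 ≤ t) :
    abelIntegral (fun s => c + d * g s) t
      = c * ENNReal.ofReal (2 * √t) + d * abelIntegral g t := by
  simp only [abelIntegral, add_mul, mul_assoc]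
  rw [lintegral_add_left (by fun_prop), lintegral_const_mul' _ _ hd,
    lintegral_const_mul _ (by fun_prop), lintegral_one_div_sqrt_sub ht, sub_zero]

theorem abelIntegral_abelIntegral {f : ℝ → ℝ≥0∞} (hf : Measurable f) (t : ℝ) :
    abelIntegral (abelIntegral f) t = ENNReal.ofReal π * ∫⁻ r in Icc 0 t, f r := by
  have hinner : ∀ r ∈ Ico 0 t, ∫⁻ s in Icc r t,
      f r * ENNReal.ofReal (1 / √(s - r)) * ENNReal.ofReal (1 / √(t - s))
        = f r * ENNReal.ofReal π := by
    intro r hr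
    simp_rw [mul_assoc]
    rw [lintegral_const_mul _ (by fun_prop), lintegral_one_div_sqrt_sub_mul_one_div_sqrt_sub hr.2]
  calc abelIntegral (abelIntegral f) t
      = ∫⁻ s in Icc 0 t, ∫⁻ r in Icc 0 s,
          f r * ENNReal.ofReal (1 / √(s - r)) * ENNReal.ofReal (1 / √(t - s)) := by
        simp_rw [abelIntegral, lintegral_mul_const' _ _ ENNReal.ofReal_ne_top]
    _ = ∫⁻ r in Icc 0 t, ∫⁻ s in Icc r t,
          f r * ENNReal.ofReal (1 / √(s - r)) * ENNReal.ofReal (1 / √(t - s)) :=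
        lintegral_Icc_lintegral_Icc_swap (by fun_prop) 0 t
    _ = ∫⁻ r in Icc 0 t, f r * ENNReal.ofReal π := by
        rw [setLIntegral_congr Ico_ae_eq_Icc.symm, setLIntegral_congr_fun measurableSet_Ico hinner,
          setLIntegral_congr Ico_ae_eq_Icc]
    _ = ENNReal.ofReal π * ∫⁻ r in Icc 0 t, f r := by
        rw [lintegral_mul_const' _ _ ENNReal.ofReal_ne_top, mul_comm]

theorem le_add_mul_lintegral_of_le_add_mul_abelIntegral {f : ℝ → ℝ≥0∞} (hf : Measurable f)
    {c d : ℝ≥0∞} (hd : d ≠ ∞) {t : ℝ} (ht : 0 ≤ t)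
    (h : ∀ s ∈ Icc 0 t, f s ≤ c + d * abelIntegral f s) :
    f t ≤ c + d * (c * ENNReal.ofReal (2 * √t)
      + d * (ENNReal.ofReal π * ∫⁻ s in Icc 0 t, f s)) :=
  calc f t ≤ c + d * abelIntegral f t := h t ⟨ht, le_rfl⟩
    _ ≤ c + d * abelIntegral (fun s => c + d * abelIntegral f s) t := by
        gcongr
        exact setLIntegral_mono' measurableSet_Icc fun s hs => by gcongr; exact h s hs
    _ = _ := by rw [abelIntegral_const_add_mul c hd _ ht, abelIntegral_abelIntegral hf]

theorem ofReal_integral_div_sqrt_le_abelIntegral {u : ℝ → ℝ} (hu : Measurable u)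
    (hu0 : ∀ s, 0 ≤ u s) {t : ℝ} (ht : 0 ≤ t) :
    ENNReal.ofReal (∫ s in (0:ℝ)..t, u s / √(t - s))
      ≤ abelIntegral (fun s => ENNReal.ofReal (u s)) t := by
  have hmeas : Measurable fun s => u s / √(t - s) := by fun_prop
  rw [intervalIntegral.integral_of_le ht, integral_eq_lintegral_of_nonneg_ae
    (ae_of_all _ fun s => by have := hu0 s; positivity) hmeas.aestronglyMeasurable, abelIntegral,
    ← setLIntegral_congr Ioc_ae_eq_Icc]
  refine ENNReal.ofReal_toReal_le.trans_eq (lintegral_congr fun s => ?_)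
  rw [div_eq_mul_one_div, ENNReal.ofReal_mul (hu0 s)]

theorem le_add_mul_integral_of_le_add_mul_integral_div_sqrt {u : ℝ → ℝ} (hu : Continuous u)
    (hu0 : ∀ s, 0 ≤ u s) {a b t : ℝ} (ha : 0 ≤ a) (hb : 0 ≤ b) (ht : 0 ≤ t)
    (h : ∀ s ∈ Icc 0 t, u s ≤ a + b * ∫ r in (0:ℝ)..s, u r / √(s - r)) :
    u t ≤ a + 2 * a * b * √t + π * b ^ 2 * ∫ s in (0:ℝ)..t, u s := by
  have hU : ∀ s ∈ Icc 0 t, ENNReal.ofReal (u s)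
      ≤ ENNReal.ofReal a + ENNReal.ofReal b * abelIntegral (fun r => ENNReal.ofReal (u r)) s := by
    intro s hs
    calc ENNReal.ofReal (u s)
        ≤ ENNReal.ofReal a + ENNReal.ofReal (b * ∫ r in (0:ℝ)..s, u r / √(s - r)) :=
          (ENNReal.ofReal_le_ofReal (h s hs)).trans ENNReal.ofReal_add_le
      _ ≤ _ := by
          rw [ENNReal.ofReal_mul hb]
          gcongr
          exact ofReal_integral_div_sqrt_le_abelIntegral hu.measurable hu0 hs.1
  have hint :
      ∫⁻ s in Icc 0 t, ENNReal.ofReal (u s) = ENNReal.ofReal (∫ s in (0:ℝ)..t, u s) := by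
    rw [intervalIntegral.integral_of_le ht, ← integral_Icc_eq_integral_Ioc,
      ofReal_integral_eq_lintegral_ofReal hu.integrableOn_Icc (ae_of_all _ hu0)]
  have hI : 0 ≤ ∫ s in (0:ℝ)..t, u s := intervalIntegral.integral_nonneg ht fun s _ => hu0 s
  have := le_add_mul_lintegral_of_le_add_mul_abelIntegral (by fun_prop) ENNReal.ofReal_ne_top ht hU
  rw [hint, ← ENNReal.ofReal_mul pi_nonneg, ← ENNReal.ofReal_mul hb, ← ENNReal.ofReal_mul ha,
    ← ENNReal.ofReal_add (by positivity) (by positivity), ← ENNReal.ofReal_mul hb,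
    ← ENNReal.ofReal_add ha (by positivity), ENNReal.ofReal_le_ofReal_iff (by positivity)] at this
  linarith

theorem le_mul_exp_of_le_add_mul_integral {u : ℝ → ℝ} {ε K a b : ℝ} (hab : a ≤ b)
    (hu : ContinuousOn u (Icc a b)) (hK : 0 ≤ K)
    (h : ∀ t ∈ Icc a b, u t ≤ ε + K * ∫ s in a..t, u s) :
    u b ≤ ε * exp (K * (b - a)) := by
  set v : ℝ → ℝ := fun t => ∫ s in a..t, u s
  have hv : ContinuousOn v (Icc a b) := by
    simpa [uIcc_of_le hab] using intervalIntegral.continuousOn_primitive_interval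
      (hu.integrableOn_Icc.mono_set (uIcc_of_le hab).subset)
  have hv' : ∀ x ∈ Ico a b, HasDerivWithinAt v (u x) (Ici x) x := by
    intro x hx
    have hIoo : Ioo x b ⊆ Icc a b := Ioo_subset_Icc_self.trans (Icc_subset_Icc_left hx.1)
    refine intervalIntegral.integral_hasDerivWithinAt_right (t := Ioi x)
      ((hu.mono (Icc_subset_Icc_right hx.2.le)).intervalIntegrable_of_Icc hx.1) ?_
      ((hu x (Ico_subset_Icc_self hx)).mono_of_mem_nhdsWithin
        (mem_of_superset (Ioo_mem_nhdsGT hx.2) hIoo))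
    rw [← nhdsWithin_Ioo_eq_nhdsGT hx.2]
    exact (hu.mono hIoo).stronglyMeasurableAtFilter_nhdsWithin measurableSet_Ioo x
  have hgron := le_gronwallBound_of_liminf_deriv_right_le (K := K) (ε := ε) hv
    (fun x hx _ hr => (hv' x hx).liminf_right_slope_le hr) (by simp [v] : v a ≤ 0)
    (fun x hx => by linarith [h x (Ico_subset_Icc_self hx)]) b ⟨hab, le_rfl⟩
  calc u b ≤ ε + K * v b := h b ⟨hab, le_rfl⟩
    _ ≤ ε + K * gronwallBound 0 K ε (b - a) := by gcongr
    _ = ε * exp (K * (b - a)) := by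
        rcases hK.eq_or_lt with rfl | hK
        · simp [gronwallBound_K0]
        · rw [gronwallBound_of_K_ne_0 hK.ne']
          field_simp
          ring

/-- Singular-kernel Gronwall inequality: if a nonnegative continuous `u` on `[0,∞)`
satisfies `u t ≤ a + b ∫₀ᵗ u s / √(t-s) ds`, then
`u t ≤ a (1 + 2 b √t) exp (π b² t)`. -/
theorem singular_gronwall (u : ℝ → ℝ) (a b : ℝ) (ha : 0 ≤ a) (hb : 0 ≤ b)
    (hu_cont : ContinuousOn u (Set.Ici 0))
    (hu_nonneg : ∀ t, 0 ≤ t → 0 ≤ u t)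
    (h : ∀ t, 0 ≤ t → u t ≤ a + b * ∫ s in (0:ℝ)..t, u s / Real.sqrt (t - s)) :
    ∀ t, 0 ≤ t → u t ≤ a * (1 + 2 * b * Real.sqrt t) * Real.exp (π * b ^ 2 * t) := by
  intro T hT
  set v : ℝ → ℝ := fun t => u (max t 0)
  have hv : Continuous v :=
    hu_cont.comp_continuous (continuous_id.max continuous_const) fun t => le_max_right t 0
  have hvu : ∀ t, 0 ≤ t → v t = u t := fun t ht => by simp [v, max_eq_left ht]
  have hv_abel : ∀ t ∈ Icc 0 T, v t ≤ a + b * ∫ s in (0:ℝ)..t, v s / √(t - s) := by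
    intro t ht
    rw [hvu t ht.1, intervalIntegral.integral_congr fun s hs => by
      rw [hvu s (uIcc_of_le ht.1 ▸ hs).1]]
    exact h t ht.1
  have hv_lin : ∀ t ∈ Icc 0 T,
      v t ≤ a * (1 + 2 * b * √T) + π * b ^ 2 * ∫ s in (0:ℝ)..t, v s := by
    intro t ht
    have hsqrt : a * b * √t ≤ a * b * √T := by gcongr; exact ht.2
    have := le_add_mul_integral_of_le_add_mul_integral_div_sqrt hv
      (fun s => hu_nonneg _ (le_max_right s 0)) ha hb ht.1
      (fun s hs => hv_abel s ⟨hs.1, hs.2.trans ht.2⟩)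
    linarith
  simpa [hvu T hT] using
    le_mul_exp_of_le_add_mul_integral hT hv.continuousOn (by positivity) hv_lin
end

section
/- Let u_l < u_r and v_l, v_r ∈ ℝ. Define w^ε(x,t) on ℝ × (0,∞) by: w^ε = w_l for x < (u_l − ε)t; w^ε = v_l²/(2ε) for (u_l − ε)t < x < u_l t; w^ε = 0 for u_l t < x < u_r t; w^ε = −v_r²/(2ε) for u_r t < x < (u_r + ε)t; and w^ε = w_r for x > (u_r + ε)t. Then for every test function φ ∈ C_c^∞(ℝ × (0,∞)), lim_{ε→0} ∫₀^∞∫_ℝ w^ε φ dx dt = ∫₀^∞∫_{x<u_l t} w_l φ dx dt + ∫₀^∞ (v_l²/2)·t·φ(u_l t, t) dt − ∫₀^∞ (v_r²/2)·t·φ(u_r t, t) dt + ∫₀^∞∫_{x>u_r t} w_r φ dx dt. -/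
open Real MeasureTheory Filter

section Aux

lemma sw_cont_intOn_Ico (ψ : ℝ → ℝ) (hψ : Continuous ψ) (a b : ℝ) :
    IntegrableOn ψ (Set.Ico a b) :=
  (hψ.continuousOn.integrableOn_Icc).mono_set Set.Ico_subset_Icc_self

lemma sw_int_Ico_sub_const (ψ : ℝ → ℝ) (hψ : Continuous ψ) (a b k : ℝ) (hab : a ≤ b) :
    ∫ x in Set.Ico a b, (ψ x - k) = (∫ x in Set.Ico a b, ψ x) - (b - a) * k := by
  rw [integral_sub (sw_cont_intOn_Ico ψ hψ a b) (integrableOn_const measure_Ico_lt_top.ne),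
    setIntegral_const]
  simp [Real.volume_Ico, Real.volume_real_Ico_of_le hab, ENNReal.toReal_ofReal (sub_nonneg.2 hab), smul_eq_mul]

lemma sw_avg_left (ψ : ℝ → ℝ) (hψ : Continuous ψ) (c : ℝ) :
    Filter.Tendsto (fun h : ℝ => (∫ x in Set.Ico (c - h) c, ψ x) / h)
      (nhdsWithin 0 (Set.Ioi 0)) (nhds (ψ c)) := by
  rw [Metric.tendsto_nhdsWithin_nhds]
  intro δ hδ
  obtain ⟨η, hη, hcont⟩ := Metric.continuousAt_iff.1 (hψ.continuousAt (x := c)) (δ/2) (by linarith)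
  refine ⟨η, hη, fun h hh hdist => ?_⟩
  have h0 : 0 < h := hh
  have hhη : h < η := by
    have := hdist; rw [Real.dist_eq, sub_zero, abs_of_pos h0] at this; exact this
  have hab : c - h ≤ c := by linarith
  have key : |(∫ x in Set.Ico (c - h) c, ψ x) - h * ψ c| ≤ δ/2 * h := by
    have heq := sw_int_Ico_sub_const ψ hψ (c - h) c (ψ c) hab
    have hb : ‖∫ x in Set.Ico (c - h) c, (ψ x - ψ c)‖
        ≤ δ/2 * (volume (Set.Ico (c-h) c)).toReal := by
      refine norm_setIntegral_le_of_norm_le_const measure_Ico_lt_top (fun x hx => ?_)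
      · have : dist x c < η := by
          rw [Real.dist_eq, abs_lt]; constructor <;> [linarith [hx.1]; linarith [hx.2]]
        exact le_of_lt (hcont this)
    rw [heq] at hb
    have hvol : (volume (Set.Ico (c-h) c)).toReal = h := by
      simp [Real.volume_Ico]; linarith
    rw [hvol] at hb
    have : c - (c - h) = h := by ring
    rw [this] at hb
    simpa [Real.norm_eq_abs] using hb
  rw [Real.dist_eq]
  have heq2 : (∫ x in Set.Ico (c - h) c, ψ x) / h - ψ c
      = ((∫ x in Set.Ico (c - h) c, ψ x) - h * ψ c) / h := by field_simp
  rw [heq2, abs_div, abs_of_pos h0]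
  calc |(∫ x in Set.Ico (c - h) c, ψ x) - h * ψ c| / h ≤ δ/2 * h / h := by
        gcongr
    _ = δ/2 := by field_simp
    _ < δ := by linarith

lemma sw_avg_right (ψ : ℝ → ℝ) (hψ : Continuous ψ) (c : ℝ) :
    Filter.Tendsto (fun h : ℝ => (∫ x in Set.Ico c (c + h), ψ x) / h)
      (nhdsWithin 0 (Set.Ioi 0)) (nhds (ψ c)) := by
  rw [Metric.tendsto_nhdsWithin_nhds]
  intro δ hδ
  obtain ⟨η, hη, hcont⟩ := Metric.continuousAt_iff.1 (hψ.continuousAt (x := c)) (δ/2) (by linarith)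
  refine ⟨η, hη, fun h hh hdist => ?_⟩
  have h0 : 0 < h := hh
  have hhη : h < η := by
    have := hdist; rw [Real.dist_eq, sub_zero, abs_of_pos h0] at this; exact this
  have hab : c ≤ c + h := by linarith
  have key : |(∫ x in Set.Ico c (c + h), ψ x) - h * ψ c| ≤ δ/2 * h := by
    have heq := sw_int_Ico_sub_const ψ hψ c (c + h) (ψ c) hab
    have hb : ‖∫ x in Set.Ico c (c + h), (ψ x - ψ c)‖
        ≤ δ/2 * (volume (Set.Ico c (c+h))).toReal := by
      refine norm_setIntegral_le_of_norm_le_const measure_Ico_lt_top (fun x hx => ?_)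
      · have : dist x c < η := by
          rw [Real.dist_eq, abs_lt]; constructor <;> [linarith [hx.1]; linarith [hx.2]]
        exact le_of_lt (hcont this)
    rw [heq] at hb
    have hvol : (volume (Set.Ico c (c+h))).toReal = h := by
      simp [Real.volume_Ico]
      linarith
    rw [hvol] at hb
    have : c + h - c = h := by ring
    rw [this] at hb
    simpa [Real.norm_eq_abs] using hb
  rw [Real.dist_eq]
  have heq2 : (∫ x in Set.Ico c (c + h), ψ x) / h - ψ c
      = ((∫ x in Set.Ico c (c + h), ψ x) - h * ψ c) / h := by field_simp
  rw [heq2, abs_div, abs_of_pos h0]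
  calc |(∫ x in Set.Ico c (c + h), ψ x) - h * ψ c| / h ≤ δ/2 * h / h := by
        gcongr
    _ = δ/2 := by field_simp
    _ < δ := by linarith

lemma sw_split_Iio (f : ℝ → ℝ) (hf : Integrable f) (a b : ℝ) (hab : a ≤ b) :
    (∫ x in Set.Iio b, f x) = (∫ x in Set.Iio a, f x) + ∫ x in Set.Ico a b, f x := by
  rw [← Set.Iio_union_Ico_eq_Iio hab]
  exact setIntegral_union
    (Set.disjoint_left.2 fun x hx hx2 => absurd hx2.1 (not_le.2 hx)) measurableSet_Ico
    hf.integrableOn hf.integrableOn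

lemma sw_split_Ici (f : ℝ → ℝ) (hf : Integrable f) (a b : ℝ) (hab : a ≤ b) :
    (∫ x in Set.Ici a, f x) = (∫ x in Set.Ico a b, f x) + ∫ x in Set.Ici b, f x := by
  rw [← Set.Ico_union_Ici_eq_Ici hab]
  exact setIntegral_union
    (Set.disjoint_left.2 fun x hx hx2 => absurd hx2 (not_le.2 hx.2)) measurableSet_Ici
    hf.integrableOn hf.integrableOn

lemma sw_split_total (f : ℝ → ℝ) (hf : Integrable f) (b : ℝ) :
    (∫ x, f x) = (∫ x in Set.Iio b, f x) + ∫ x in Set.Ici b, f x := by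
  rw [← setIntegral_union (Set.Iio_disjoint_Ici le_rfl) measurableSet_Ici
    hf.integrableOn hf.integrableOn, Set.Iio_union_Ici, setIntegral_univ]

/-- Five-way splitting of an integral over ℝ. -/
lemma sw_split5 (f : ℝ → ℝ) (hf : Integrable f) (a b c d : ℝ)
    (hab : a ≤ b) (hbc : b ≤ c) (hcd : c ≤ d) :
    (∫ x, f x) = (∫ x in Set.Iio a, f x) + (∫ x in Set.Ico a b, f x)
      + (∫ x in Set.Ico b c, f x) + (∫ x in Set.Ico c d, f x) + ∫ x in Set.Ici d, f x := by
  rw [sw_split_total f hf a, sw_split_Ici f hf a b hab, sw_split_Ici f hf b c hbc,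
    sw_split_Ici f hf c d hcd]
  ring

lemma sw_abs_gt (R x : ℝ) (hx : x ∉ Set.Icc (-R) R) : R < |x| := by
  rcases not_and_or.1 (fun hc => hx ⟨hc.1, hc.2⟩ : ¬(-R ≤ x ∧ x ≤ R)) with h1 | h2
  · exact lt_of_lt_of_le (by linarith [not_le.1 h1]) (neg_le_abs x)
  · exact lt_of_lt_of_le (not_le.1 h2) (le_abs_self x)

end Aux

set_option maxHeartbeats 2000000 in
/-- Distributional limit of the shadow-wave approximation `w^ε` for the rarefaction
case `u_l < u_r`: the limit is `w_l` left of the fan, `w_r` right of the fan, plus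
Dirac deltas `(v_l²/2)t δ_{x=u_l t}` and `−(v_r²/2)t δ_{x=u_r t}` on the fan boundaries. -/
theorem shadow_wave_limit (ul ur vl vr wl wr : ℝ) (h : ul < ur)
    (φ : ℝ → ℝ → ℝ) (hφ : ContDiff ℝ (⊤ : ℕ∞) ↿φ) (hφc : HasCompactSupport ↿φ) :
    Tendsto (fun ε : ℝ =>
        ∫ t in Set.Ioi (0:ℝ), ∫ x : ℝ,
          (if x < (ul - ε) * t then wl
           else if x < ul * t then vl ^ 2 / (2 * ε)
           else if x < ur * t then 0
           else if x < (ur + ε) * t then -vr ^ 2 / (2 * ε)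
           else wr) * φ x t)
      (nhdsWithin 0 (Set.Ioi 0))
      (nhds ((∫ t in Set.Ioi (0:ℝ), ∫ x in Set.Iio (ul * t), wl * φ x t)
        + (∫ t in Set.Ioi (0:ℝ), vl ^ 2 / 2 * t * φ (ul * t) t)
        - (∫ t in Set.Ioi (0:ℝ), vr ^ 2 / 2 * t * φ (ur * t) t)
        + ∫ t in Set.Ioi (0:ℝ), ∫ x in Set.Ioi (ur * t), wr * φ x t)) := by
  have φcont : Continuous ↿φ := hφ.continuous
  -- bound on φ
  obtain ⟨M, hM⟩ := φcont.bounded_above_of_compact_support hφc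
  have hM0 : 0 ≤ M := le_trans (norm_nonneg _) (hM (0, 0))
  have hMabs : ∀ x t, |φ x t| ≤ M := fun x t => hM (x, t)
  -- support radius
  obtain ⟨r, hr⟩ := hφc.isBounded.subset_closedBall 0
  set R : ℝ := max r 1 with hRdef
  have hR0 : 0 < R := lt_of_lt_of_le one_pos (le_max_right _ _)
  have hz : ∀ x t : ℝ, R < |x| ∨ R < |t| → φ x t = 0 := by
    intro x t hxt
    have hnm : (x, t) ∉ tsupport ↿φ := by
      intro hmem
      have hb := hr hmem
      rw [Metric.mem_closedBall, dist_zero_right, Prod.norm_def] at hb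
      simp only [Real.norm_eq_abs] at hb
      have h1 : |x| ≤ r := le_trans (le_max_left _ _) hb
      have h2 : |t| ≤ r := le_trans (le_max_right _ _) hb
      have hrR : r ≤ R := le_max_left _ _
      rcases hxt with hx | ht
      · exact absurd (h1.trans hrR) (not_le.2 hx)
      · exact absurd (h2.trans hrR) (not_le.2 ht)
    exact image_eq_zero_of_notMem_tsupport (f := ↿φ) hnm
  -- t-sections of φ
  have ψcont : ∀ t : ℝ, Continuous fun x => φ x t := fun t =>
    φcont.comp (continuous_id.prodMk continuous_const)
  have ψcs : ∀ t : ℝ, HasCompactSupport fun x => φ x t := fun t =>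
    HasCompactSupport.intro (isCompact_Icc (a := -R) (b := R)) fun x hx => by
      exact hz x t (Or.inl (sw_abs_gt R x hx))
  have ψint : ∀ t : ℝ, Integrable fun x => φ x t := fun t =>
    (ψcont t).integrable_of_hasCompactSupport (ψcs t)
  -- bound on set integrals of sections
  have hsec : ∀ (s : Set ℝ) (t : ℝ), |∫ x in s, φ x t| ≤ 2 * R * M := by
    intro s t
    have h1 : |∫ x in s, φ x t| ≤ ∫ x in s, |φ x t| := by
      simpa [Real.norm_eq_abs] using
        norm_integral_le_integral_norm (μ := volume.restrict s) (f := fun x => φ x t)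
    have h2 : (∫ x in s, |φ x t|) ≤ ∫ x, |φ x t| :=
      setIntegral_le_integral (ψint t).abs (Filter.Eventually.of_forall fun x => abs_nonneg _)
    have h3 : (∫ x, |φ x t|) ≤ ∫ x, (Set.Icc (-R) R).indicator (fun _ => M) x := by
      apply integral_mono (ψint t).abs
        ((integrableOn_const measure_Icc_lt_top.ne).integrable_indicator measurableSet_Icc)
      intro x
      by_cases hx : x ∈ Set.Icc (-R) R
      · rw [Set.indicator_of_mem hx]; exact hMabs x t
      · rw [Set.indicator_of_notMem hx]
        have : φ x t = 0 := hz x t (Or.inl (sw_abs_gt R x hx))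
        simp [this]
    have h4 : (∫ x, (Set.Icc (-R) R).indicator (fun _ => M) x) = 2 * R * M := by
      rw [integral_indicator_const _ measurableSet_Icc, Measure.real, Real.volume_Icc, smul_eq_mul,
        ENNReal.toReal_ofReal (by linarith)]
      ring
    linarith
  -- bound on Ico set integrals of sections
  have hseco : ∀ (a b t : ℝ), a ≤ b → |∫ x in Set.Ico a b, φ x t| ≤ M * (b - a) := by
    intro a b t hab
    have := norm_setIntegral_le_of_norm_le_const (μ := volume) (s := Set.Ico a b)
      (f := fun x => φ x t) (C := M) measure_Ico_lt_top
      (fun x _ => by simpa [Real.norm_eq_abs] using hMabs x t)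
    rw [Measure.real, Real.volume_Ico, ENNReal.toReal_ofReal (by linarith)] at this
    simpa [Real.norm_eq_abs] using this
  -- abbreviation for the shadow-wave profile
  set W : ℝ → ℝ → ℝ → ℝ := fun ε t x =>
    (if x < (ul - ε) * t then wl
     else if x < ul * t then vl ^ 2 / (2 * ε)
     else if x < ur * t then 0
     else if x < (ur + ε) * t then -vr ^ 2 / (2 * ε)
     else wr) with hWdef
  have hWmeas : ∀ ε : ℝ, Measurable fun p : ℝ × ℝ => W ε p.1 p.2 := by
    intro ε
    apply Measurable.ite (measurableSet_lt measurable_snd (measurable_fst.const_mul _))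
      measurable_const
    apply Measurable.ite (measurableSet_lt measurable_snd (measurable_fst.const_mul _))
      measurable_const
    apply Measurable.ite (measurableSet_lt measurable_snd (measurable_fst.const_mul _))
      measurable_const
    exact Measurable.ite (measurableSet_lt measurable_snd (measurable_fst.const_mul _))
      measurable_const measurable_const
  have hWbound : ∀ ε > 0, ∀ t x : ℝ,
      |W ε t x| ≤ |wl| + |wr| + vl ^ 2 / (2 * ε) + vr ^ 2 / (2 * ε) := by
    intro ε hε t x
    have hvl : 0 ≤ vl ^ 2 / (2 * ε) := div_nonneg (sq_nonneg _) (by linarith)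
    have hvr : 0 ≤ vr ^ 2 / (2 * ε) := div_nonneg (sq_nonneg _) (by linarith)
    simp only [hWdef]
    split_ifs
    · linarith [abs_nonneg wr]
    · rw [abs_of_nonneg hvl]; linarith [abs_nonneg wl, abs_nonneg wr]
    · rw [abs_zero]; linarith [abs_nonneg wl, abs_nonneg wr]
    · have hne : -vr ^ 2 / (2 * ε) = -(vr ^ 2 / (2 * ε)) := by ring
      rw [hne, abs_neg, abs_of_nonneg hvr]; linarith [abs_nonneg wl, abs_nonneg wr]
    · linarith [abs_nonneg wl]
  -- integrability of the integrand in x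
  have hfint : ∀ ε > 0, ∀ t : ℝ, Integrable fun x => W ε t x * φ x t := by
    intro ε hε t
    set K := |wl| + |wr| + vl ^ 2 / (2 * ε) + vr ^ 2 / (2 * ε)
    refine Integrable.mono' (((ψint t).abs.const_mul K)) ?_ ?_
    · exact (((hWmeas ε).comp (measurable_const.prodMk measurable_id)).mul
        (ψcont t).measurable).aestronglyMeasurable
    · refine Filter.Eventually.of_forall fun x => ?_
      rw [Real.norm_eq_abs, abs_mul]
      exact mul_le_mul_of_nonneg_right (hWbound ε hε t x) (abs_nonneg _)
  -- Decomposition of the inner integral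
  have hdec : ∀ ε > 0, ∀ t > 0,
      (∫ x : ℝ, W ε t x * φ x t)
        = wl * (∫ x in Set.Iio ((ul - ε) * t), φ x t)
          + vl ^ 2 / (2 * ε) * (∫ x in Set.Ico ((ul - ε) * t) (ul * t), φ x t)
          + (-vr ^ 2 / (2 * ε)) * (∫ x in Set.Ico (ur * t) ((ur + ε) * t), φ x t)
          + wr * ∫ x in Set.Ici ((ur + ε) * t), φ x t := by
    intro ε hε t ht
    have hab : (ul - ε) * t ≤ ul * t := by nlinarith
    have hbc : ul * t ≤ ur * t := by nlinarith
    have hcd : ur * t ≤ (ur + ε) * t := by nlinarith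
    rw [sw_split5 _ (hfint ε hε t) ((ul - ε) * t) (ul * t) (ur * t) ((ur + ε) * t) hab hbc hcd]
    have e1 : (∫ x in Set.Iio ((ul - ε) * t), W ε t x * φ x t)
        = wl * ∫ x in Set.Iio ((ul - ε) * t), φ x t := by
      rw [← MeasureTheory.integral_const_mul]
      refine setIntegral_congr_fun measurableSet_Iio fun x hx => ?_
      simp only [hWdef]
      rw [if_pos (Set.mem_Iio.1 hx)]
    have e2 : (∫ x in Set.Ico ((ul - ε) * t) (ul * t), W ε t x * φ x t)
        = vl ^ 2 / (2 * ε) * ∫ x in Set.Ico ((ul - ε) * t) (ul * t), φ x t := by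
      rw [← MeasureTheory.integral_const_mul]
      refine setIntegral_congr_fun measurableSet_Ico fun x hx => ?_
      simp only [hWdef]
      rw [if_neg (not_lt.2 hx.1), if_pos hx.2]
    have e3 : (∫ x in Set.Ico (ul * t) (ur * t), W ε t x * φ x t) = 0 := by
      rw [← integral_zero ℝ ℝ (μ := volume.restrict (Set.Ico (ul * t) (ur * t)))]
      refine setIntegral_congr_fun measurableSet_Ico fun x hx => ?_
      simp only [hWdef]
      rw [if_neg (not_lt.2 (le_trans hab hx.1)), if_neg (not_lt.2 hx.1), if_pos hx.2]
      ring
    have e4 : (∫ x in Set.Ico (ur * t) ((ur + ε) * t), W ε t x * φ x t)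
        = (-vr ^ 2 / (2 * ε)) * ∫ x in Set.Ico (ur * t) ((ur + ε) * t), φ x t := by
      rw [← MeasureTheory.integral_const_mul]
      refine setIntegral_congr_fun measurableSet_Ico fun x hx => ?_
      simp only [hWdef]
      rw [if_neg (not_lt.2 (le_trans (hab.trans hbc) hx.1)),
        if_neg (not_lt.2 (le_trans hbc hx.1)), if_neg (not_lt.2 hx.1), if_pos hx.2]
    have e5 : (∫ x in Set.Ici ((ur + ε) * t), W ε t x * φ x t)
        = wr * ∫ x in Set.Ici ((ur + ε) * t), φ x t := by
      rw [← MeasureTheory.integral_const_mul]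
      refine setIntegral_congr_fun measurableSet_Ici fun x hx => ?_
      simp only [hWdef]
      rw [if_neg (not_lt.2 (le_trans (hab.trans (hbc.trans hcd)) hx)),
        if_neg (not_lt.2 (le_trans (hbc.trans hcd) hx)),
        if_neg (not_lt.2 (le_trans hcd hx)), if_neg (not_lt.2 hx)]
    rw [e1, e2, e3, e4, e5]
    ring
  -- measurability of φ swapped
  have φswap : Measurable fun p : ℝ × ℝ => φ p.2 p.1 :=
    (φcont.comp (continuous_snd.prodMk continuous_fst)).measurable
  -- the limit function
  set L : ℝ → ℝ := fun t =>
    wl * (∫ x in Set.Iio (ul * t), φ x t) + vl ^ 2 / 2 * t * φ (ul * t) t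
      - vr ^ 2 / 2 * t * φ (ur * t) t + wr * ∫ x in Set.Ici (ur * t), φ x t with hLdef
  -- dominating function
  set C : ℝ := |wl| * (2 * R * M) + vl ^ 2 * M * R / 2 + vr ^ 2 * M * R / 2 + |wr| * (2 * R * M)
    with hCdef
  have hC0 : 0 ≤ C := by positivity
  set g : ℝ → ℝ := (Set.Icc (-R) R).indicator (fun _ => C) with hgdef
  have hgint : Integrable g :=
    (integrableOn_const measure_Icc_lt_top.ne).integrable_indicator measurableSet_Icc
  have hgint' : Integrable g (volume.restrict (Set.Ioi 0)) := hgint.restrict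
  have hg0 : ∀ t, 0 ≤ g t := fun t => Set.indicator_nonneg (fun _ _ => hC0) t
  have hgC : ∀ t, 0 < t → t ≤ R → g t = C := by
    intro t ht htR
    exact Set.indicator_of_mem (Set.mem_Icc.mpr ⟨by linarith, htR⟩) _
  have hgz : ∀ t, R < t → g t = 0 := fun t htR =>
    Set.indicator_of_notMem (fun hc => absurd hc.2 (not_le.2 htR)) _
  -- measurability of the inner integral as a function of t
  have hmeasF : ∀ ε : ℝ, AEStronglyMeasurable (fun t => ∫ x, W ε t x * φ x t)
      (volume.restrict (Set.Ioi 0)) := by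
    intro ε
    have hsm : StronglyMeasurable (Function.uncurry fun t x => W ε t x * φ x t) :=
      ((hWmeas ε).mul φswap).stronglyMeasurable
    exact (hsm.integral_prod_right).aestronglyMeasurable.restrict
  -- the uniform bound
  have hbound : ∀ ε > 0, ∀ t : ℝ, 0 < t → ‖∫ x, W ε t x * φ x t‖ ≤ g t := by
    intro ε hε t ht
    by_cases htR : t ≤ R
    · rw [Real.norm_eq_abs, hdec ε hε t ht, hgC t ht htR]
      have hab : (ul - ε) * t ≤ ul * t := by nlinarith
      have hcd : ur * t ≤ (ur + ε) * t := by nlinarith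
      have hvl' : 0 ≤ vl ^ 2 / (2 * ε) := div_nonneg (sq_nonneg _) (by linarith)
      have hvr' : 0 ≤ vr ^ 2 / (2 * ε) := div_nonneg (sq_nonneg _) (by linarith)
      have B1 : |wl * ∫ x in Set.Iio ((ul - ε) * t), φ x t| ≤ |wl| * (2 * R * M) := by
        rw [abs_mul]; exact mul_le_mul_of_nonneg_left (hsec _ t) (abs_nonneg wl)
      have B2 : |vl ^ 2 / (2 * ε) * ∫ x in Set.Ico ((ul - ε) * t) (ul * t), φ x t|
          ≤ vl ^ 2 * M * R / 2 := by
        rw [abs_mul, abs_of_nonneg hvl']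
        calc vl ^ 2 / (2 * ε) * |∫ x in Set.Ico ((ul - ε) * t) (ul * t), φ x t|
            ≤ vl ^ 2 / (2 * ε) * (M * (ul * t - (ul - ε) * t)) :=
              mul_le_mul_of_nonneg_left (hseco _ _ t hab) hvl'
          _ = vl ^ 2 * M * t / 2 := by field_simp; ring
          _ ≤ vl ^ 2 * M * R / 2 := by nlinarith [mul_nonneg (mul_nonneg (sq_nonneg vl) hM0) (sub_nonneg.2 htR)]
      have B3 : |(-vr ^ 2 / (2 * ε)) * ∫ x in Set.Ico (ur * t) ((ur + ε) * t), φ x t|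
          ≤ vr ^ 2 * M * R / 2 := by
        rw [abs_mul]
        have : |(-vr ^ 2 / (2 * ε))| = vr ^ 2 / (2 * ε) := by
          rw [show -vr ^ 2 / (2 * ε) = -(vr ^ 2 / (2 * ε)) by ring, abs_neg, abs_of_nonneg hvr']
        rw [this]
        calc vr ^ 2 / (2 * ε) * |∫ x in Set.Ico (ur * t) ((ur + ε) * t), φ x t|
            ≤ vr ^ 2 / (2 * ε) * (M * ((ur + ε) * t - ur * t)) :=
              mul_le_mul_of_nonneg_left (hseco _ _ t hcd) hvr'
          _ = vr ^ 2 * M * t / 2 := by field_simp; ring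
          _ ≤ vr ^ 2 * M * R / 2 := by nlinarith [mul_nonneg (mul_nonneg (sq_nonneg vr) hM0) (sub_nonneg.2 htR)]
      have B4 : |wr * ∫ x in Set.Ici ((ur + ε) * t), φ x t| ≤ |wr| * (2 * R * M) := by
        rw [abs_mul]; exact mul_le_mul_of_nonneg_left (hsec _ t) (abs_nonneg wr)
      set a1 := wl * ∫ x in Set.Iio ((ul - ε) * t), φ x t
      set a2 := vl ^ 2 / (2 * ε) * ∫ x in Set.Ico ((ul - ε) * t) (ul * t), φ x t
      set a3 := (-vr ^ 2 / (2 * ε)) * ∫ x in Set.Ico (ur * t) ((ur + ε) * t), φ x t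
      set a4 := wr * ∫ x in Set.Ici ((ur + ε) * t), φ x t
      have htri : |a1 + a2 + a3 + a4| ≤ |a1| + |a2| + |a3| + |a4| := by
        calc |a1 + a2 + a3 + a4| ≤ |a1 + a2 + a3| + |a4| := abs_add_le _ _
          _ ≤ (|a1 + a2| + |a3|) + |a4| := by gcongr; exact abs_add_le _ _
          _ ≤ ((|a1| + |a2|) + |a3|) + |a4| := by gcongr; exact abs_add_le _ _
      rw [hCdef]
      linarith
    · have hψ0 : ∀ x, φ x t = 0 := fun x =>
        hz x t (Or.inr (by rw [abs_of_pos ht]; exact not_le.1 htR))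
      have hzero : (∫ x, W ε t x * φ x t) = 0 := by
        simp only [hψ0, mul_zero, integral_zero]
      rw [hzero, norm_zero]
      exact hg0 t
  -- pointwise limit for each t > 0
  have hlimpt : ∀ t : ℝ, 0 < t →
      Filter.Tendsto (fun ε => ∫ x, W ε t x * φ x t) (nhdsWithin 0 (Set.Ioi 0)) (nhds (L t)) := by
    intro t ht
    have hscale : Filter.Tendsto (fun ε : ℝ => ε * t) (nhdsWithin 0 (Set.Ioi 0))
        (nhdsWithin 0 (Set.Ioi 0)) := by
      apply tendsto_nhdsWithin_of_tendsto_nhds_of_eventually_within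
      · have h0 : Filter.Tendsto (fun ε : ℝ => ε * t) (nhds 0) (nhds (0 * t)) :=
          (continuous_id.mul continuous_const).tendsto 0
        rw [zero_mul] at h0
        exact h0.mono_left nhdsWithin_le_nhds
      · filter_upwards [self_mem_nhdsWithin] with ε hε
        exact mul_pos hε ht
    have hscale0 : Filter.Tendsto (fun ε : ℝ => ε * t) (nhdsWithin 0 (Set.Ioi 0)) (nhds 0) :=
      hscale.mono_right nhdsWithin_le_nhds
    have havgL := (sw_avg_left (fun x => φ x t) (ψcont t) (ul * t)).comp hscale
    have havgR := (sw_avg_right (fun x => φ x t) (ψcont t) (ur * t)).comp hscale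
    -- the Ico integrals tend to zero
    have hL0 : Filter.Tendsto (fun ε => ∫ x in Set.Ico (ul * t - ε * t) (ul * t), φ x t)
        (nhdsWithin 0 (Set.Ioi 0)) (nhds 0) := by
      have hmul := hscale0.mul havgL
      rw [zero_mul] at hmul
      apply hmul.congr'
      filter_upwards [self_mem_nhdsWithin] with ε hε
      have hne : ε * t ≠ 0 := ne_of_gt (mul_pos hε ht)
      show ε * t * ((∫ x in Set.Ico (ul * t - ε * t) (ul * t), φ x t) / (ε * t)) = _
      field_simp [ne_of_gt (show (0:ℝ) < ε from hε)]
    have hR0 : Filter.Tendsto (fun ε => ∫ x in Set.Ico (ur * t) (ur * t + ε * t), φ x t)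
        (nhdsWithin 0 (Set.Ioi 0)) (nhds 0) := by
      have hmul := hscale0.mul havgR
      rw [zero_mul] at hmul
      apply hmul.congr'
      filter_upwards [self_mem_nhdsWithin] with ε hε
      have hne : ε * t ≠ 0 := ne_of_gt (mul_pos hε ht)
      show ε * t * ((∫ x in Set.Ico (ur * t) (ur * t + ε * t), φ x t) / (ε * t)) = _
      field_simp [ne_of_gt (show (0:ℝ) < ε from hε)]
    -- delta terms
    have hT2 : Filter.Tendsto
        (fun ε => vl ^ 2 / (2 * ε) * ∫ x in Set.Ico (ul * t - ε * t) (ul * t), φ x t)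
        (nhdsWithin 0 (Set.Ioi 0)) (nhds (vl ^ 2 * t / 2 * φ (ul * t) t)) := by
      have hmul := havgL.const_mul (vl ^ 2 * t / 2)
      apply hmul.congr'
      filter_upwards [self_mem_nhdsWithin] with ε hε
      have hne : ε * t ≠ 0 := ne_of_gt (mul_pos hε ht)
      have hε' : (ε:ℝ) ≠ 0 := ne_of_gt hε
      have ht' : (t:ℝ) ≠ 0 := ne_of_gt ht
      show vl ^ 2 * t / 2 * ((∫ x in Set.Ico (ul * t - ε * t) (ul * t), φ x t) / (ε * t)) = _
      field_simp
    have hT3 : Filter.Tendsto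
        (fun ε => -vr ^ 2 / (2 * ε) * ∫ x in Set.Ico (ur * t) (ur * t + ε * t), φ x t)
        (nhdsWithin 0 (Set.Ioi 0)) (nhds (-(vr ^ 2 * t / 2) * φ (ur * t) t)) := by
      have hmul := havgR.const_mul (-(vr ^ 2 * t / 2))
      apply hmul.congr'
      filter_upwards [self_mem_nhdsWithin] with ε hε
      have hne : ε * t ≠ 0 := ne_of_gt (mul_pos hε ht)
      have hε' : (ε:ℝ) ≠ 0 := ne_of_gt hε
      have ht' : (t:ℝ) ≠ 0 := ne_of_gt ht
      show -(vr ^ 2 * t / 2) * ((∫ x in Set.Ico (ur * t) (ur * t + ε * t), φ x t) / (ε * t)) = _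
      field_simp
    -- combine
    have htotal : Filter.Tendsto
        (fun ε =>
          (wl * (∫ x in Set.Iio (ul * t), φ x t)
              - wl * ∫ x in Set.Ico (ul * t - ε * t) (ul * t), φ x t)
            + vl ^ 2 / (2 * ε) * (∫ x in Set.Ico (ul * t - ε * t) (ul * t), φ x t)
            + -vr ^ 2 / (2 * ε) * (∫ x in Set.Ico (ur * t) (ur * t + ε * t), φ x t)
            + (wr * (∫ x in Set.Ici (ur * t), φ x t)
              - wr * ∫ x in Set.Ico (ur * t) (ur * t + ε * t), φ x t))
        (nhdsWithin 0 (Set.Ioi 0)) (nhds (L t)) := by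
      have hc1 : Filter.Tendsto (fun _ : ℝ => wl * ∫ x in Set.Iio (ul * t), φ x t)
          (nhdsWithin 0 (Set.Ioi 0)) (nhds (wl * ∫ x in Set.Iio (ul * t), φ x t)) :=
        tendsto_const_nhds
      have hc2 : Filter.Tendsto (fun _ : ℝ => wr * ∫ x in Set.Ici (ur * t), φ x t)
          (nhdsWithin 0 (Set.Ioi 0)) (nhds (wr * ∫ x in Set.Ici (ur * t), φ x t)) :=
        tendsto_const_nhds
      have := (((hc1.sub (hL0.const_mul wl)).add hT2).add hT3).add
        (hc2.sub (hR0.const_mul wr))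
      have hval : (wl * (∫ x in Set.Iio (ul * t), φ x t) - wl * 0 + vl ^ 2 * t / 2 * φ (ul * t) t
          + -(vr ^ 2 * t / 2) * φ (ur * t) t
          + (wr * (∫ x in Set.Ici (ur * t), φ x t) - wr * 0)) = L t := by
        rw [hLdef]; ring
      rwa [hval] at this
    apply htotal.congr'
    filter_upwards [self_mem_nhdsWithin] with ε hε
    rw [hdec ε hε t ht]
    have e1 : (ul - ε) * t = ul * t - ε * t := by ring
    have e2 : (ur + ε) * t = ur * t + ε * t := by ring
    rw [e1, e2]
    have hεt : 0 < ε * t := mul_pos hε ht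
    have hsplit1 := sw_split_Iio (fun x => φ x t) (ψint t) (ul * t - ε * t) (ul * t)
      (by linarith)
    have hsplit2 := sw_split_Ici (fun x => φ x t) (ψint t) (ur * t) (ur * t + ε * t)
      (by linarith)
    rw [hsplit2]
    have : (∫ x in Set.Iio (ul * t - ε * t), φ x t)
        = (∫ x in Set.Iio (ul * t), φ x t) - ∫ x in Set.Ico (ul * t - ε * t) (ul * t), φ x t := by
      rw [hsplit1]; ring
    rw [this]
    ring
  -- apply dominated convergence
  have hDCT := MeasureTheory.tendsto_integral_filter_of_dominated_convergence
    (μ := volume.restrict (Set.Ioi (0:ℝ))) (l := nhdsWithin (0:ℝ) (Set.Ioi 0))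
    (F := fun ε t => ∫ x, W ε t x * φ x t) (f := L) g
    (Filter.Eventually.of_forall fun ε => hmeasF ε)
    (by
      filter_upwards [self_mem_nhdsWithin] with ε hε
      filter_upwards [ae_restrict_mem measurableSet_Ioi] with t ht
      exact hbound ε hε t ht)
    hgint'
    (by
      filter_upwards [ae_restrict_mem measurableSet_Ioi] with t ht
      exact hlimpt t ht)
  -- identify the limit value
  have hRHS : (∫ t in Set.Ioi (0:ℝ), L t)
      = (∫ t in Set.Ioi (0:ℝ), ∫ x in Set.Iio (ul * t), wl * φ x t)
        + (∫ t in Set.Ioi (0:ℝ), vl ^ 2 / 2 * t * φ (ul * t) t)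
        - (∫ t in Set.Ioi (0:ℝ), vr ^ 2 / 2 * t * φ (ur * t) t)
        + ∫ t in Set.Ioi (0:ℝ), ∫ x in Set.Ioi (ur * t), wr * φ x t := by
    -- integrability of the four pieces
    have hIA : IntegrableOn (fun t => wl * ∫ x in Set.Iio (ul * t), φ x t) (Set.Ioi 0) := by
      refine Integrable.mono' hgint' ?_ ?_
      · have hsm : StronglyMeasurable
            (Function.uncurry fun t x => (Set.Iio (ul * t)).indicator (fun x => φ x t) x) := by
          have : (Function.uncurry fun t x => (Set.Iio (ul * t)).indicator (fun x => φ x t) x)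
              = fun p : ℝ × ℝ => if p.2 < ul * p.1 then φ p.2 p.1 else 0 := by
            funext p
            simp [Function.uncurry, Set.indicator_apply]
          rw [this]
          exact (Measurable.ite (measurableSet_lt measurable_snd (measurable_fst.const_mul ul))
            φswap measurable_const).stronglyMeasurable
        have := hsm.integral_prod_right (ν := volume)
        have heq : (fun t => wl * ∫ x in Set.Iio (ul * t), φ x t)
            = fun t => wl * ∫ x, (Set.Iio (ul * t)).indicator (fun x => φ x t) x := by
          funext t
          rw [integral_indicator measurableSet_Iio]
        rw [heq]
        exact ((this.const_mul wl).aestronglyMeasurable).restrict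
      · filter_upwards [ae_restrict_mem measurableSet_Ioi] with t ht
        by_cases htR : t ≤ R
        · rw [Real.norm_eq_abs, abs_mul, hgC t ht htR, hCdef]
          have := mul_le_mul_of_nonneg_left (hsec (Set.Iio (ul * t)) t) (abs_nonneg wl)
          have p1 : (0:ℝ) ≤ vl ^ 2 * M * R / 2 := by positivity
          have p2 : (0:ℝ) ≤ vr ^ 2 * M * R / 2 := by positivity
          have p3 : (0:ℝ) ≤ |wl| * (2 * R * M) := by positivity
          have p4 : (0:ℝ) ≤ |wr| * (2 * R * M) := by positivity
          linarith
        · have hψ0 : ∀ x, φ x t = 0 := fun x =>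
            hz x t (Or.inr (by rw [abs_of_pos ht]; exact not_le.1 htR))
          simp only [hψ0, hgz t (not_le.1 htR)]
          simp
    have hID : IntegrableOn (fun t => wr * ∫ x in Set.Ici (ur * t), φ x t) (Set.Ioi 0) := by
      refine Integrable.mono' hgint' ?_ ?_
      · have hsm : StronglyMeasurable
            (Function.uncurry fun t x => (Set.Ici (ur * t)).indicator (fun x => φ x t) x) := by
          have : (Function.uncurry fun t x => (Set.Ici (ur * t)).indicator (fun x => φ x t) x)
              = fun p : ℝ × ℝ => if ur * p.1 ≤ p.2 then φ p.2 p.1 else 0 := by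
            funext p
            simp [Function.uncurry, Set.indicator_apply, Set.mem_Ici]
          rw [this]
          exact (Measurable.ite (measurableSet_le (measurable_fst.const_mul ur) measurable_snd)
            φswap measurable_const).stronglyMeasurable
        have := hsm.integral_prod_right (ν := volume)
        have heq : (fun t => wr * ∫ x in Set.Ici (ur * t), φ x t)
            = fun t => wr * ∫ x, (Set.Ici (ur * t)).indicator (fun x => φ x t) x := by
          funext t
          rw [integral_indicator measurableSet_Ici]
        rw [heq]
        exact ((this.const_mul wr).aestronglyMeasurable).restrict
      · filter_upwards [ae_restrict_mem measurableSet_Ioi] with t ht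
        by_cases htR : t ≤ R
        · rw [Real.norm_eq_abs, abs_mul, hgC t ht htR, hCdef]
          have := mul_le_mul_of_nonneg_left (hsec (Set.Ici (ur * t)) t) (abs_nonneg wr)
          have p1 : (0:ℝ) ≤ vl ^ 2 * M * R / 2 := by positivity
          have p2 : (0:ℝ) ≤ vr ^ 2 * M * R / 2 := by positivity
          have p3 : (0:ℝ) ≤ |wl| * (2 * R * M) := by positivity
          have p4 : (0:ℝ) ≤ |wr| * (2 * R * M) := by positivity
          linarith
        · have hψ0 : ∀ x, φ x t = 0 := fun x =>
            hz x t (Or.inr (by rw [abs_of_pos ht]; exact not_le.1 htR))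
          simp only [hψ0, hgz t (not_le.1 htR)]
          simp
    have hcontB : ∀ c : ℝ, Continuous fun t : ℝ => φ (c * t) t := fun c =>
      φcont.comp ((continuous_const.mul continuous_id).prodMk continuous_id)
    have hIB : IntegrableOn (fun t => vl ^ 2 / 2 * t * φ (ul * t) t) (Set.Ioi 0) := by
      apply Integrable.integrableOn
      apply Continuous.integrable_of_hasCompactSupport
      · exact (continuous_const.mul continuous_id).mul (hcontB ul)
      · apply HasCompactSupport.intro (isCompact_Icc (a := -R) (b := R))
        intro t htR
        have : φ (ul * t) t = 0 := hz _ t (Or.inr (sw_abs_gt R t htR))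
        simp [this]
    have hIC : IntegrableOn (fun t => vr ^ 2 / 2 * t * φ (ur * t) t) (Set.Ioi 0) := by
      apply Integrable.integrableOn
      apply Continuous.integrable_of_hasCompactSupport
      · exact (continuous_const.mul continuous_id).mul (hcontB ur)
      · apply HasCompactSupport.intro (isCompact_Icc (a := -R) (b := R))
        intro t htR
        have : φ (ur * t) t = 0 := hz _ t (Or.inr (sw_abs_gt R t htR))
        simp [this]
    have hLsum : (∫ t in Set.Ioi (0:ℝ), L t)
        = (∫ t in Set.Ioi (0:ℝ), wl * ∫ x in Set.Iio (ul * t), φ x t)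
          + (∫ t in Set.Ioi (0:ℝ), vl ^ 2 / 2 * t * φ (ul * t) t)
          - (∫ t in Set.Ioi (0:ℝ), vr ^ 2 / 2 * t * φ (ur * t) t)
          + ∫ t in Set.Ioi (0:ℝ), wr * ∫ x in Set.Ici (ur * t), φ x t := by
      have hI1 : IntegrableOn (fun t => wl * (∫ x in Set.Iio (ul * t), φ x t)
          + vl ^ 2 / 2 * t * φ (ul * t) t) (Set.Ioi 0) := hIA.add hIB
      have hI2 : IntegrableOn (fun t => wl * (∫ x in Set.Iio (ul * t), φ x t)
          + vl ^ 2 / 2 * t * φ (ul * t) t - vr ^ 2 / 2 * t * φ (ur * t) t) (Set.Ioi 0) :=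
        hI1.sub hIC
      rw [hLdef]
      rw [integral_add hI2 hID, integral_sub hI1 hIC, integral_add hIA hIB]
    rw [hLsum]
    congr 1
    · congr 1
      · congr 1
        refine setIntegral_congr_fun measurableSet_Ioi fun t _ => ?_
        exact (MeasureTheory.integral_const_mul wl _).symm
    · refine setIntegral_congr_fun measurableSet_Ioi fun t _ => ?_
      rw [← MeasureTheory.integral_const_mul, integral_Ici_eq_integral_Ioi]
  rw [← hRHS]
  exact hDCT
end

section
/- Let η : ℝ → ℝ be a C¹ convex function and c₁, c₂, c₃ ∈ ℝ. Define E(u,v,w,z) = η(u) + c₁v + c₂w + c₃z and Q(u,v,w,z) = ∫₀^u s·η'(s) ds + c₁·u·v + c₂·(v²/2 + u·w) + c₃·(v·w + u·z). Then for every smooth solution (u,v,w,z) of the system u_t + (u²/2)_x = 0, v_t + (uv)_x = 0, w_t + (v²/2 + uw)_x = 0, z_t + (vw + uz)_x = 0, the additional conservation law E(u,v,w,z)_t + Q(u,v,w,z)_x = 0 holds. -/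
open Real MeasureTheory

/-! The flux `Q` is compatible with `E` in the sense `∇Q = ∇E · DF`, where `F` is the flux of the
system: along any path, `Q'` is the combination of the derivatives of the four component fluxes
with coefficients `η'(u), c₁, c₂, c₃` (for the first term this is `d/du ∫₀ᵘ s η'(s) ds = η'(u) · u`).
The time derivative of `E` is the same combination of `u_t, v_t, w_t, z_t`, so `E_t + Q_x` is a
combination of the four equations of the system. -/

section Partial

variable {𝕜 E F G : Type*} [NontriviallyNormedField 𝕜]
  [NormedAddCommGroup E] [NormedSpace 𝕜 E] [NormedAddCommGroup F] [NormedSpace 𝕜 F]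
  [NormedAddCommGroup G] [NormedSpace 𝕜 G] {f : E → F → G} {x : E} {t : F}

theorem DifferentiableAt.of_uncurry_fst (h : DifferentiableAt 𝕜 ↿f (x, t)) :
    DifferentiableAt 𝕜 (fun y => f y t) x :=
  h.comp (f := fun y => (y, t)) x (differentiableAt_id.prodMk (differentiableAt_const t))

theorem DifferentiableAt.of_uncurry_snd (h : DifferentiableAt 𝕜 ↿f (x, t)) :
    DifferentiableAt 𝕜 (fun τ => f x τ) t :=
  h.comp (f := fun τ => (x, τ)) t ((differentiableAt_const x).prodMk differentiableAt_id)

end Partial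

section EntropyPair

variable {η : ℝ → ℝ} (c₁ c₂ c₃ : ℝ) {u v w z : ℝ → ℝ} {x : ℝ}

theorem hasDerivAt_entropy (hη : DifferentiableAt ℝ η (u x))
    (hu : DifferentiableAt ℝ u x) (hv : DifferentiableAt ℝ v x)
    (hw : DifferentiableAt ℝ w x) (hz : DifferentiableAt ℝ z x) :
    HasDerivAt (fun τ => η (u τ) + c₁ * v τ + c₂ * w τ + c₃ * z τ)
      (deriv η (u x) * deriv u x + c₁ * deriv v x + c₂ * deriv w x + c₃ * deriv z x) x :=
  (((hη.hasDerivAt.comp x hu.hasDerivAt).add (hv.hasDerivAt.const_mul c₁)).add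
    (hw.hasDerivAt.const_mul c₂)).add (hz.hasDerivAt.const_mul c₃)

theorem hasDerivAt_entropyFlux (hη : Continuous (deriv η))
    (hu : DifferentiableAt ℝ u x) (hv : DifferentiableAt ℝ v x)
    (hw : DifferentiableAt ℝ w x) (hz : DifferentiableAt ℝ z x) :
    HasDerivAt (fun y =>
        (∫ s in (0:ℝ)..(u y), s * deriv η s)
          + c₁ * (u y * v y)
          + c₂ * (v y ^ 2 / 2 + u y * w y)
          + c₃ * (v y * w y + u y * z y))
      (deriv η (u x) * deriv (fun y => u y ^ 2 / 2) x
        + c₁ * deriv (fun y => u y * v y) x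
        + c₂ * deriv (fun y => v y ^ 2 / 2 + u y * w y) x
        + c₃ * deriv (fun y => v y * w y + u y * z y) x) x := by
  have hint : HasDerivAt (fun y => ∫ s in (0:ℝ)..(u y), s * deriv η s)
      (u x * deriv η (u x) * deriv u x) x :=
    ((continuous_id.mul hη).integral_hasStrictDerivAt 0 (u x)).hasDerivAt.comp x hu.hasDerivAt
  have hsq : HasDerivAt (fun y => u y ^ 2 / 2) (u x * deriv u x) x :=
    ((hu.hasDerivAt.fun_pow 2).div_const 2).congr_deriv (by push_cast; ring)
  rw [hsq.deriv, mul_left_comm, ← mul_assoc]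
  exact ((hint.add ((hu.mul hv).hasDerivAt.const_mul c₁)).add
    ((((hv.pow 2).div_const 2).add (hu.mul hw)).hasDerivAt.const_mul c₂)).add
    (((hv.mul hw).add (hu.mul hz)).hasDerivAt.const_mul c₃)

end EntropyPair

theorem entropy_pair_conservation_general (η : ℝ → ℝ) (hη : ContDiff ℝ 1 η)
    (c₁ c₂ c₃ : ℝ)
    (Ω : Set (ℝ × ℝ)) (hΩ : IsOpen Ω)
    (u v w z : ℝ → ℝ → ℝ)
    (hu : ContDiffOn ℝ 1 ↿u Ω) (hv : ContDiffOn ℝ 1 ↿v Ω)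
    (hw : ContDiffOn ℝ 1 ↿w Ω) (hz : ContDiffOn ℝ 1 ↿z Ω)
    (heq1 : ∀ x t : ℝ, (x, t) ∈ Ω →
      deriv (fun τ => u x τ) t + deriv (fun y => (u y t) ^ 2 / 2) x = 0)
    (heq2 : ∀ x t : ℝ, (x, t) ∈ Ω →
      deriv (fun τ => v x τ) t + deriv (fun y => u y t * v y t) x = 0)
    (heq3 : ∀ x t : ℝ, (x, t) ∈ Ω →
      deriv (fun τ => w x τ) t
        + deriv (fun y => (v y t) ^ 2 / 2 + u y t * w y t) x = 0)
    (heq4 : ∀ x t : ℝ, (x, t) ∈ Ω →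
      deriv (fun τ => z x τ) t
        + deriv (fun y => v y t * w y t + u y t * z y t) x = 0) :
    ∀ x t : ℝ, (x, t) ∈ Ω →
      deriv (fun τ => η (u x τ) + c₁ * v x τ + c₂ * w x τ + c₃ * z x τ) t
        + deriv (fun y =>
            (∫ s in (0:ℝ)..(u y t), s * deriv η s)
              + c₁ * (u y t * v y t)
              + c₂ * ((v y t) ^ 2 / 2 + u y t * w y t)
              + c₃ * (v y t * w y t + u y t * z y t)) x = 0 := by
  intro x t hxt
  have hΩxt := hΩ.mem_nhds hxt
  have hud := (hu.contDiffAt hΩxt).differentiableAt one_ne_zero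
  have hvd := (hv.contDiffAt hΩxt).differentiableAt one_ne_zero
  have hwd := (hw.contDiffAt hΩxt).differentiableAt one_ne_zero
  have hzd := (hz.contDiffAt hΩxt).differentiableAt one_ne_zero
  rw [(hasDerivAt_entropy c₁ c₂ c₃ ((hη.differentiable one_ne_zero) _) hud.of_uncurry_snd
      hvd.of_uncurry_snd hwd.of_uncurry_snd hzd.of_uncurry_snd).deriv,
    (hasDerivAt_entropyFlux c₁ c₂ c₃ (hη.continuous_deriv le_rfl) hud.of_uncurry_fst
      hvd.of_uncurry_fst hwd.of_uncurry_fst hzd.of_uncurry_fst).deriv]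
  linear_combination deriv η (u x t) * heq1 x t hxt + c₁ * heq2 x t hxt
    + c₂ * heq3 x t hxt + c₃ * heq4 x t hxt

/-- Entropy–entropy flux pair for the 4×4 prolonged Burgers system:
with `E(u,v,w,z) = η(u) + c₁v + c₂w + c₃z` and
`Q(u,v,w,z) = ∫₀ᵘ s η'(s) ds + c₁uv + c₂(v²/2 + uw) + c₃(vw + uz)`,
every `C¹` solution of the system on an open set `Ω` satisfies the additional
conservation law `E_t + Q_x = 0`. -/
theorem entropy_pair_conservation (η : ℝ → ℝ) (hη : ContDiff ℝ 1 η)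
    (hconv : ConvexOn ℝ Set.univ η) (c₁ c₂ c₃ : ℝ)
    (Ω : Set (ℝ × ℝ)) (hΩ : IsOpen Ω)
    (u v w z : ℝ → ℝ → ℝ)
    (hu : ContDiffOn ℝ 1 ↿u Ω) (hv : ContDiffOn ℝ 1 ↿v Ω)
    (hw : ContDiffOn ℝ 1 ↿w Ω) (hz : ContDiffOn ℝ 1 ↿z Ω)
    (heq1 : ∀ x t : ℝ, (x, t) ∈ Ω →
      deriv (fun τ => u x τ) t + deriv (fun y => (u y t) ^ 2 / 2) x = 0)
    (heq2 : ∀ x t : ℝ, (x, t) ∈ Ω →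
      deriv (fun τ => v x τ) t + deriv (fun y => u y t * v y t) x = 0)
    (heq3 : ∀ x t : ℝ, (x, t) ∈ Ω →
      deriv (fun τ => w x τ) t
        + deriv (fun y => (v y t) ^ 2 / 2 + u y t * w y t) x = 0)
    (heq4 : ∀ x t : ℝ, (x, t) ∈ Ω →
      deriv (fun τ => z x τ) t
        + deriv (fun y => v y t * w y t + u y t * z y t) x = 0) :
    ∀ x t : ℝ, (x, t) ∈ Ω →
      deriv (fun τ => η (u x τ) + c₁ * v x τ + c₂ * w x τ + c₃ * z x τ) t
        + deriv (fun y =>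
            (∫ s in (0:ℝ)..(u y t), s * deriv η s)
              + c₁ * (u y t * v y t)
              + c₂ * ((v y t) ^ 2 / 2 + u y t * w y t)
              + c₃ * (v y t * w y t + u y t * z y t)) x = 0 :=
  entropy_pair_conservation_general η hη c₁ c₂ c₃ Ω hΩ u v w z hu hv hw hz heq1 heq2 heq3 heq4
end

section
/- Let ε > 0, let a > 0 and b be smooth solutions of the heat equation f_t = (ε/2)f_{xx} on ℝ × (0,∞), and set u = −ε(log a)_x, v = −ε(b/a)_x. Then v satisfies the linear convection–diffusion equation v_t + (uv)_x = (ε/2)v_{xx}. -/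
open Real Set

def HC.dom : Set (ℝ × ℝ) := Set.univ ×ˢ Set.Ioi 0
noncomputable def HC.px (G : ℝ → ℝ → ℝ) : ℝ → ℝ → ℝ := fun x t => deriv (fun y => G y t) x
noncomputable def HC.pt (G : ℝ → ℝ → ℝ) : ℝ → ℝ → ℝ := fun x t => deriv (fun τ => G x τ) t
noncomputable def HC.W (a b : ℝ → ℝ → ℝ) : ℝ → ℝ → ℝ := fun x t => b x t / a x t

namespace HC
lemma open_dom : IsOpen dom := isOpen_univ.prod isOpen_Ioi
lemma mem_dom {x t : ℝ} (ht : 0 < t) : ((x, t) : ℝ × ℝ) ∈ dom := ⟨mem_univ _, ht⟩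
variable {G : ℝ → ℝ → ℝ} {x t : ℝ}

lemma diffAt (h : ContDiffOn ℝ (⊤ : ℕ∞) ↿G dom) (ht : 0 < t) : DifferentiableAt ℝ ↿G (x, t) :=
  (h.contDiffAt (open_dom.mem_nhds (mem_dom ht))).differentiableAt (by simp)

lemma hX (h : ContDiffOn ℝ (⊤ : ℕ∞) ↿G dom) (ht : 0 < t) :
    HasDerivAt (fun y => G y t) (px G x t) x :=
  by have h1 := (((diffAt (x := x) h ht).comp x (differentiableAt_id.prodMk (differentiableAt_const t)))).hasDerivAt; exact h1

lemma hT (h : ContDiffOn ℝ (⊤ : ℕ∞) ↿G dom) (ht : 0 < t) :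
    HasDerivAt (fun τ => G x τ) (pt G x t) t :=
  (((diffAt h ht).comp t ((differentiableAt_const x).prodMk differentiableAt_id))).hasDerivAt

lemma px_eq_fderiv (h : ContDiffOn ℝ (⊤ : ℕ∞) ↿G dom) (ht : 0 < t) :
    px G x t = fderiv ℝ ↿G (x, t) (1, 0) :=
  by have h1 := (((diffAt (x := x) h ht).hasFDerivAt).comp_hasDerivAt x
    ((hasDerivAt_id x).prodMk (hasDerivAt_const x t))).deriv; exact h1

lemma pt_eq_fderiv (h : ContDiffOn ℝ (⊤ : ℕ∞) ↿G dom) (ht : 0 < t) :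
    pt G x t = fderiv ℝ ↿G (x, t) (0, 1) :=
  (((diffAt h ht).hasFDerivAt).comp_hasDerivAt t
    ((hasDerivAt_const t x).prodMk (hasDerivAt_id t))).deriv

lemma contDiffOn_px (h : ContDiffOn ℝ (⊤ : ℕ∞) ↿G dom) : ContDiffOn ℝ (⊤ : ℕ∞) ↿(px G) dom := by
  have h1 : ContDiffOn ℝ (⊤ : ℕ∞) (fun p : ℝ × ℝ => fderiv ℝ ↿G p (1, 0)) dom :=
    (h.fderiv_of_isOpen open_dom (by simp)).clm_apply contDiffOn_const
  exact h1.congr fun p hp => px_eq_fderiv h hp.2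

lemma clairaut (h : ContDiffOn ℝ (⊤ : ℕ∞) ↿G dom) (ht : 0 < t) :
    px (pt G) x t = pt (px G) x t := by
  set f' := fderiv ℝ ↿G with hf'def
  have hcd' : ContDiffOn ℝ (⊤ : ℕ∞) f' dom := h.fderiv_of_isOpen open_dom (by simp)
  have hf'' : HasFDerivAt f' (fderiv ℝ f' (x, t)) (x, t) :=
    ((hcd'.contDiffAt (open_dom.mem_nhds (mem_dom ht))).differentiableAt (by simp)).hasFDerivAt
  have hev : ∀ᶠ p in nhds (x, t), HasFDerivAt ↿G (f' p) p := by
    filter_upwards [open_dom.mem_nhds (mem_dom ht)] with p hp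
    exact ((h.contDiffAt (open_dom.mem_nhds hp)).differentiableAt (by simp)).hasFDerivAt
  have hsymm := second_derivative_symmetric_of_eventually hev hf''
    ((1 : ℝ), (0 : ℝ)) ((0 : ℝ), (1 : ℝ))
  have hL : px (pt G) x t = fderiv ℝ f' (x, t) (1, 0) (0, 1) := by
    have heq : (fun y => pt G y t) = fun y => f' (y, t) (0, 1) :=
      funext fun y => pt_eq_fderiv h ht
    have h1 : HasDerivAt (fun y => f' (y, t)) (fderiv ℝ f' (x, t) (1, 0)) x :=
      hf''.comp_hasDerivAt x ((hasDerivAt_id x).prodMk (hasDerivAt_const x t))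
    have h2 : HasDerivAt (fun y => f' (y, t) (0, 1))
        (fderiv ℝ f' (x, t) (1, 0) (0, 1) + (f' (x, t)) 0) x :=
      h1.clm_apply (hasDerivAt_const x ((0 : ℝ), (1 : ℝ)))
    show deriv (fun y => pt G y t) x = _
    rw [heq, h2.deriv, map_zero, add_zero]
  have hR : pt (px G) x t = fderiv ℝ f' (x, t) (0, 1) (1, 0) := by
    have heq : (fun τ => px G x τ) =ᶠ[nhds t] fun τ => f' (x, τ) (1, 0) := by
      filter_upwards [Ioi_mem_nhds ht] with τ hτ
      exact px_eq_fderiv h hτ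
    have h1 : HasDerivAt (fun τ => f' (x, τ)) (fderiv ℝ f' (x, t) (0, 1)) t :=
      hf''.comp_hasDerivAt t ((hasDerivAt_const t x).prodMk (hasDerivAt_id t))
    have h2 : HasDerivAt (fun τ => f' (x, τ) (1, 0))
        (fderiv ℝ f' (x, t) (0, 1) (1, 0) + (f' (x, t)) 0) t :=
      h1.clm_apply (hasDerivAt_const t ((1 : ℝ), (0 : ℝ)))
    show deriv (fun τ => px G x τ) t = _
    rw [heq.deriv_eq, h2.deriv, map_zero, add_zero]
  rw [hL, hR, hsymm]

end HC

open HC in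
/-- Second step of the generalized Hopf–Cole transformation: if `a > 0` and `b`
are smooth solutions of the heat equation `f_t = (ε/2)f_{xx}` on `ℝ × (0,∞)`,
then `u = −ε(log a)_x` and `v = −ε(b/a)_x` satisfy `v_t + (uv)_x = (ε/2)v_{xx}`. -/
theorem hopf_cole_second_component (ε : ℝ) (hε : 0 < ε) (a b : ℝ → ℝ → ℝ)
    (ha : ContDiffOn ℝ (⊤ : ℕ∞) ↿a (Set.univ ×ˢ Set.Ioi 0))
    (hb : ContDiffOn ℝ (⊤ : ℕ∞) ↿b (Set.univ ×ˢ Set.Ioi 0))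
    (hapos : ∀ x t : ℝ, 0 < t → 0 < a x t)
    (haheat : ∀ x t : ℝ, 0 < t →
      deriv (fun τ => a x τ) t = ε / 2 * deriv (fun y => deriv (fun y' => a y' t) y) x)
    (hbheat : ∀ x t : ℝ, 0 < t →
      deriv (fun τ => b x τ) t = ε / 2 * deriv (fun y => deriv (fun y' => b y' t) y) x) :
    ∀ x t : ℝ, 0 < t →
      deriv (fun τ => -ε * deriv (fun y => b y τ / a y τ) x) t
        + deriv (fun y =>
            (-ε * deriv (fun y' => Real.log (a y' t)) y)
              * (-ε * deriv (fun y' => b y' t / a y' t) y)) x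
        = ε / 2 * deriv (fun y =>
            deriv (fun y' => -ε * deriv (fun y'' => b y'' t / a y'' t) y') y) x := by
  intro x t ht
  have ha' : ContDiffOn ℝ (⊤ : ℕ∞) ↿a dom := ha
  have hb' : ContDiffOn ℝ (⊤ : ℕ∞) ↿b dom := hb
  have hW : ContDiffOn ℝ (⊤ : ℕ∞) ↿(W a b) dom :=
    hb'.div ha' fun p hp => (hapos p.1 p.2 hp.2).ne'
  have hW1 : ContDiffOn ℝ (⊤ : ℕ∞) ↿(px (W a b)) dom := contDiffOn_px hW
  have hW2 : ContDiffOn ℝ (⊤ : ℕ∞) ↿(px (px (W a b))) dom := contDiffOn_px hW1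
  have hA1 : ContDiffOn ℝ (⊤ : ℕ∞) ↿(px a) dom := contDiffOn_px ha'
  have hane : ∀ y : ℝ, a y t ≠ 0 := fun y => (hapos y t ht).ne'
  -- b = W * a on the time-t slice and eventually in time
  have hba : ∀ (y τ : ℝ), 0 < τ → b y τ = W a b y τ * a y τ := fun y τ hτ =>
    (div_mul_cancel₀ _ (hapos y τ hτ).ne').symm
  -- the equation satisfied by W (fixed t, all y)
  have hWt : ∀ y : ℝ, pt (W a b) y t
      = ε / 2 * px (px (W a b)) y t + ε * (px (W a b) y t * px a y t / a y t) := by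
    intro y
    -- first x-derivative of b
    have hB1 : ∀ z : ℝ, px b z t = px (W a b) z t * a z t + W a b z t * px a z t := by
      intro z
      have h1 : HasDerivAt (fun y' => W a b y' t * a y' t)
          (px (W a b) z t * a z t + W a b z t * px a z t) z := (hX hW ht).mul (hX ha' ht)
      have h2 : (fun y' => b y' t) = fun y' => W a b y' t * a y' t :=
        funext fun y' => hba y' t ht
      show deriv (fun y' => b y' t) z = _
      rw [h2]; exact h1.deriv
    -- second x-derivative of b
    have hB2 : px (px b) y t
        = (px (px (W a b)) y t * a y t + px (W a b) y t * px a y t)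
          + (px (W a b) y t * px a y t + W a b y t * px (px a) y t) := by
      have h1 : HasDerivAt (fun z => px (W a b) z t * a z t + W a b z t * px a z t)
          ((px (px (W a b)) y t * a y t + px (W a b) y t * px a y t)
            + (px (W a b) y t * px a y t + W a b y t * px (px a) y t)) y :=
        ((hX hW1 ht).mul (hX ha' ht)).add ((hX hW ht).mul (hX hA1 ht))
      have h2 : (fun z => px b z t) = fun z => px (W a b) z t * a z t + W a b z t * px a z t :=
        funext hB1
      show deriv (fun z => px b z t) y = _
      rw [h2]; exact h1.deriv
    -- time derivative of b
    have hBt : pt b y t = pt (W a b) y t * a y t + W a b y t * pt a y t := by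
      have h1 : HasDerivAt (fun τ => W a b y τ * a y τ)
          (pt (W a b) y t * a y t + W a b y t * pt a y t) t := (hT hW ht).mul (hT ha' ht)
      have h2 : (fun τ => b y τ) =ᶠ[nhds t] fun τ => W a b y τ * a y τ := by
        filter_upwards [Ioi_mem_nhds ht] with τ hτ
        exact hba y τ hτ
      show deriv (fun τ => b y τ) t = _
      rw [h2.deriv_eq]; exact h1.deriv
    have hbh : pt b y t = ε / 2 * px (px b) y t := hbheat y t ht
    have hah : pt a y t = ε / 2 * px (px a) y t := haheat y t ht
    have key : pt (W a b) y t * a y t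
        = ε / 2 * px (px (W a b)) y t * a y t + ε * (px (W a b) y t * px a y t) := by
      have := hbh
      rw [hBt, hB2, hah] at this
      linarith
    field_simp [hane y]
    linear_combination 2 * key
  -- x-derivative of the W-equation
  have hQd : HasDerivAt (fun y => px (W a b) y t * px a y t / a y t)
      (((px (px (W a b)) x t * px a x t + px (W a b) x t * px (px a) x t) * a x t
        - px (W a b) x t * px a x t * px a x t) / a x t ^ 2) x :=
    ((hX hW1 ht).mul (hX hA1 ht)).div (hX ha' ht) (hane x)
  set q : ℝ := ((px (px (W a b)) x t * px a x t + px (W a b) x t * px (px a) x t) * a x t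
        - px (W a b) x t * px a x t * px a x t) / a x t ^ 2 with hq
  have hstep2 : px (pt (W a b)) x t
      = ε / 2 * px (px (px (W a b))) x t + ε * q := by
    have h1 : HasDerivAt
        (fun y => ε / 2 * px (px (W a b)) y t + ε * (px (W a b) y t * px a y t / a y t))
        (ε / 2 * px (px (px (W a b))) x t + ε * q) x :=
      ((hX hW2 ht).const_mul (ε / 2)).add (hQd.const_mul ε)
    have h2 : (fun y => pt (W a b) y t)
        = fun y => ε / 2 * px (px (W a b)) y t + ε * (px (W a b) y t * px a y t / a y t) :=
      funext hWt
    show deriv (fun y => pt (W a b) y t) x = _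
    rw [h2]; exact h1.deriv
  -- rewrite the three terms of the goal
  have hE1 : deriv (fun τ => -ε * deriv (fun y => b y τ / a y τ) x) t
      = -ε * pt (px (W a b)) x t := by
    have h1 : HasDerivAt (fun τ => -ε * px (W a b) x τ) (-ε * pt (px (W a b)) x t) t :=
      (hT hW1 ht).const_mul (-ε)
    exact h1.deriv
  have hE2 : deriv (fun y =>
        (-ε * deriv (fun y' => Real.log (a y' t)) y)
          * (-ε * deriv (fun y' => b y' t / a y' t) y)) x
      = ε ^ 2 * q := by
    have hfun : (fun y =>
        (-ε * deriv (fun y' => Real.log (a y' t)) y)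
          * (-ε * deriv (fun y' => b y' t / a y' t) y))
        = fun y => ε ^ 2 * (px (W a b) y t * px a y t / a y t) := by
      funext y
      have hlog : deriv (fun y' => Real.log (a y' t)) y = px a y t / a y t :=
        ((hX ha' ht).log (hane y)).deriv
      have hw1 : deriv (fun y' => b y' t / a y' t) y = px (W a b) y t := rfl
      rw [hlog, hw1]
      field_simp [hane y]
    rw [hfun]
    exact (hQd.const_mul (ε ^ 2)).deriv
  have hE3 : deriv (fun y =>
        deriv (fun y' => -ε * deriv (fun y'' => b y'' t / a y'' t) y') y) x
      = -ε * px (px (px (W a b))) x t := by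
    have hfun : (fun y => deriv (fun y' => -ε * deriv (fun y'' => b y'' t / a y'' t) y') y)
        = fun y => -ε * px (px (W a b)) y t := by
      funext y
      have h1 : HasDerivAt (fun y' => -ε * px (W a b) y' t) (-ε * px (px (W a b)) y t) y :=
        (hX hW1 ht).const_mul (-ε)
      exact h1.deriv
    rw [hfun]
    exact ((hX hW2 ht).const_mul (-ε)).deriv
  rw [hE1, hE2, hE3]
  have hcl : px (pt (W a b)) x t = pt (px (W a b)) x t := clairaut hW ht
  rw [← hcl, hstep2]
  ring
end

section
/- Let L(u) = u_t − a(x,t)u_{xx} + b(x,t)u_x + c(x,t)u with a ≥ 0, |b| ≤ C bounded, and c(x,t) ≥ −a₀ for constants C, a₀ ≥ 0. If u is bounded, continuous on ℝ × [0,T], C² in x and C¹ in t for 0 < t ≤ T, and L(u) = f with f bounded, then sup_{x∈ℝ, 0≤t≤T} |u(x,t)| ≤ (sup_x |u(x,0)| + T·sup_{x,t} |f(x,t)|)·exp(a₀T). -/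
/-!
For `ε > 0` compare `u` with `w = e^{-a₀ t} u - (M₀ + F t) - ε e^{μ t} g(x)`, where `g ≥ 1` is a
smoothing of `1 + |x|` and `μ` is chosen so that `a g'' - b g' < μ g` on the strip; this is possible
because `g''` vanishes outside `[-1, 1]` and `a` is continuous. As `u` is bounded and `g → ∞`, a
positive value of `w` yields a positive maximum of `w` on `ℝ × [0, T]`, attained at a time `t₀ > 0`
since `w ≤ 0` at `t = 0`. There `w_x = 0`, `w_xx ≤ 0` and `w_t ≥ 0`, which together with
`L u = f ≤ F` and `c + a₀ ≥ 0` is contradictory. Letting `ε → 0` gives `u ≤ (M₀ + F t) e^{a₀ t}`,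
and the same bound for `-u` finishes the proof.
-/

open Real Set Filter Topology

theorem IsLocalMax.hasDerivAt_hasDerivAt_nonpos {f f' : ℝ → ℝ} {a f'' : ℝ} (h : IsLocalMax f a)
    (hf : ∀ᶠ x in 𝓝 a, HasDerivAt f (f' x) x) (hf' : HasDerivAt f' f'' a) : f'' ≤ 0 := by
  have hf'' : deriv (deriv f) a = f'' :=
    (Filter.EventuallyEq.deriv_eq (hf.mono fun x hx => hx.deriv)).trans hf'.deriv
  by_contra! hpos
  -- By the second derivative test `a` is also a local minimum, so `f` is constant near `a`.
  have hmin : IsLocalMin f a :=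
    isLocalMin_of_deriv_deriv_pos (hf'' ▸ hpos) h.deriv_eq_zero hf.self_of_nhds.continuousAt
  have hconst : f =ᶠ[𝓝 a] fun _ => f a := (h.and hmin).mono fun x hx => le_antisymm hx.1 hx.2
  have : deriv (deriv f) a = 0 := by
    rw [hconst.deriv.deriv_eq]
    simp
  linarith

theorem IsLocalMaxOn.hasDerivWithinAt_Iic_nonneg {f : ℝ → ℝ} {a f' : ℝ}
    (h : IsLocalMaxOn f (Iic a) a) (hf : HasDerivWithinAt f f' (Iic a) a) : 0 ≤ f' := by
  have hmem : (-1 : ℝ) ∈ posTangentConeAt (Iic a) a :=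
    mem_posTangentConeAt_of_segment_subset <|
      (convex_Iic a).segment_subset (mem_Iic.2 le_rfl) (by simp : a + -1 ∈ Iic a)
  simpa using h.hasFDerivWithinAt_nonpos hf.hasFDerivWithinAt hmem

theorem exists_pos_isMaxOn_of_nonpos_outside {X : Type*} [TopologicalSpace X] {S K : Set X}
    {W : X → ℝ} {p : X} (hS : IsClosed S) (hK : IsCompact K) (hW : ContinuousOn W S)
    (hout : ∀ x ∈ S, x ∉ K → W x ≤ 0) (hp : p ∈ S) (hpos : 0 < W p) :
    ∃ q ∈ S, 0 < W q ∧ IsMaxOn W S q := by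
  have hpK : p ∈ S ∩ K := ⟨hp, by_contra fun h => (hout p hp h).not_gt hpos⟩
  obtain ⟨q, hq, hmax⟩ := (hK.inter_left hS).exists_isMaxOn ⟨p, hpK⟩ (hW.mono inter_subset_left)
  have hq_pos : 0 < W q := hpos.trans_le (hmax hpK)
  refine ⟨q, hq.1, hq_pos, fun x hx => ?_⟩
  by_cases hxK : x ∈ K
  · exact hmax ⟨hx, hxK⟩
  · exact (hout x hx hxK).trans hq_pos.le

theorem nonpos_on_strip_of_no_pos_max {w : ℝ → ℝ → ℝ} {T : ℝ} {L : Set ℝ}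
    (hw : Continuous ↿w) (hL : IsCompact L) (hout : ∀ x ∉ L, ∀ t, 0 ≤ t → t ≤ T → w x t ≤ 0)
    (hinit : ∀ x, w x 0 ≤ 0)
    (hmax : ∀ x₀ t₀, 0 < t₀ → t₀ ≤ T → 0 < w x₀ t₀ →
      (∀ x t, 0 ≤ t → t ≤ T → w x t ≤ w x₀ t₀) → False) :
    ∀ x t, 0 ≤ t → t ≤ T → w x t ≤ 0 := by
  intro x t ht0 htT
  by_contra! hpos
  obtain ⟨⟨x₀, t₀⟩, ⟨-, ht₀⟩, hq_pos, hq_max⟩ :=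
    exists_pos_isMaxOn_of_nonpos_outside (S := univ ×ˢ Icc 0 T) (K := L ×ˢ Icc 0 T)
      (isClosed_univ.prod isClosed_Icc) (hL.prod isCompact_Icc) hw.continuousOn
      (fun q hq hqK => hout q.1 (fun h => hqK ⟨h, hq.2⟩) q.2 hq.2.1 hq.2.2)
      (p := (x, t)) ⟨trivial, ht0, htT⟩ hpos
  have ht₀_pos : 0 < t₀ := ht₀.1.lt_of_ne fun h => (hinit x₀).not_gt (h ▸ hq_pos)
  exact hmax x₀ t₀ ht₀_pos ht₀.2 hq_pos fun x t h0 hT =>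
    hq_max (show (x, t) ∈ univ ×ˢ Icc 0 T from ⟨trivial, h0, hT⟩)

noncomputable def barrier (x : ℝ) : ℝ := 1 + x * (smoothTransition x - smoothTransition (-x))

theorem contDiff_barrier {n : ℕ∞} : ContDiff ℝ n barrier := by
  unfold barrier
  have := smoothTransition.contDiff (n := n)
  fun_prop

theorem one_le_barrier (x : ℝ) : 1 ≤ barrier x := by
  have h1 := smoothTransition.nonneg x
  have h2 := smoothTransition.nonneg (-x)
  rcases le_total 0 x with hx | hx
  · rw [barrier, smoothTransition.zero_of_nonpos (neg_nonpos.2 hx)]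
    nlinarith
  · rw [barrier, smoothTransition.zero_of_nonpos hx]
    nlinarith

theorem barrier_eq_of_one_le_abs {x : ℝ} (hx : 1 ≤ |x|) : barrier x = 1 + |x| := by
  rcases le_abs'.1 hx with hx | hx
  · rw [barrier, smoothTransition.zero_of_nonpos (by linarith),
      smoothTransition.one_of_one_le (by linarith), abs_of_neg (by linarith)]
    ring
  · rw [barrier, smoothTransition.one_of_one_le hx,
      smoothTransition.zero_of_nonpos (by linarith), abs_of_pos (by linarith)]
    ring

theorem abs_le_barrier (x : ℝ) : |x| ≤ barrier x := by
  rcases le_total 1 |x| with hx | hx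
  · rw [barrier_eq_of_one_le_abs hx]; linarith
  · exact hx.trans (one_le_barrier x)

theorem tendsto_barrier_cocompact : Tendsto barrier (cocompact ℝ) atTop :=
  tendsto_atTop_mono abs_le_barrier tendsto_norm_cocompact_atTop

theorem deriv_barrier_eventuallyEq {x : ℝ} (hx : 1 < |x|) :
    ∃ s : ℝ, |s| = 1 ∧ deriv barrier =ᶠ[𝓝 x] fun _ => s := by
  have hloc : ∀ᶠ y in 𝓝 x, barrier y = 1 + |y| := by
    filter_upwards [(isOpen_lt continuous_const continuous_abs).mem_nhds
      (show x ∈ {y : ℝ | 1 < |y|} from hx)] with y hy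
    exact barrier_eq_of_one_le_abs (le_of_lt hy)
  obtain ⟨s, hs, haffine⟩ : ∃ s : ℝ, |s| = 1 ∧ barrier =ᶠ[𝓝 x] fun y => 1 + s * y := by
    rcases lt_abs.1 hx with hx | hx
    · refine ⟨1, abs_one, ?_⟩
      filter_upwards [hloc, lt_mem_nhds (zero_lt_one.trans hx)] with y hy hy0
      rw [hy, abs_of_pos hy0, one_mul]
    · refine ⟨-1, by simp, ?_⟩
      filter_upwards [hloc, gt_mem_nhds (show x < 0 by linarith)] with y hy hy0
      rw [hy, abs_of_neg hy0]
      ring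
  refine ⟨s, hs, haffine.deriv.trans (Eventually.of_forall fun y => ?_)⟩
  simp

theorem exists_abs_deriv_barrier_le : ∃ B, ∀ x, |deriv barrier x| ≤ B := by
  obtain ⟨B, hB⟩ := (isCompact_Icc (a := (-1 : ℝ)) (b := 1)).exists_bound_of_continuousOn
    ((contDiff_barrier (n := 1)).continuous_deriv le_rfl).continuousOn
  refine ⟨max B 1, fun x => ?_⟩
  rcases le_or_gt |x| 1 with hx | hx
  · exact (hB x (abs_le.1 hx)).trans (le_max_left _ _)
  · obtain ⟨s, hs, hderiv⟩ := deriv_barrier_eventuallyEq hx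
    rw [hderiv.eq_of_nhds, hs]
    exact le_max_right _ _

structure IsParabolicBarrier (a b : ℝ → ℝ → ℝ) (T μ : ℝ) (g : ℝ → ℝ) : Prop where
  nonneg : ∀ x, 0 ≤ g x
  tendsto_cocompact : Tendsto g (cocompact ℝ) atTop
  contDiff : ContDiff ℝ 2 g
  lt : ∀ x t, 0 < t → t ≤ T → a x t * deriv (deriv g) x - b x t * deriv g x < μ * g x

theorem exists_isParabolicBarrier_barrier {a b : ℝ → ℝ → ℝ} {C : ℝ} (T : ℝ)
    (ha : Continuous ↿a) (hb : ∀ x t, |b x t| ≤ C) :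
    ∃ μ, 0 ≤ μ ∧ IsParabolicBarrier a b T μ barrier := by
  have hC : 0 ≤ C := (abs_nonneg _).trans (hb 0 0)
  obtain ⟨B, hB⟩ := exists_abs_deriv_barrier_le
  have hcont : Continuous fun p : ℝ × ℝ => a p.1 p.2 * deriv (deriv barrier) p.1 :=
    ha.mul (((contDiff_barrier (n := ⊤)).iterate_deriv 2).continuous.comp continuous_fst)
  obtain ⟨A, hA⟩ := (isCompact_Icc.prod isCompact_Icc).exists_bound_of_continuousOn
    (s := Icc (-1) 1 ×ˢ Icc 0 T) hcont.continuousOn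
  have hsecond : ∀ x t, 0 ≤ t → t ≤ T → a x t * deriv (deriv barrier) x ≤ |A| := by
    intro x t ht0 htT
    rcases le_or_gt |x| 1 with hx | hx
    · exact (le_abs_self _).trans ((hA (x, t) ⟨abs_le.1 hx, ht0, htT⟩).trans (le_abs_self A))
    · obtain ⟨s, -, hderiv⟩ := deriv_barrier_eventuallyEq hx
      rw [hderiv.deriv_eq, deriv_const, mul_zero]
      exact abs_nonneg A
  have hfirst : ∀ x t, -(b x t * deriv barrier x) ≤ C * |B| := fun x t =>
    (neg_le_abs _).trans <| (abs_mul _ _).trans_le <|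
      mul_le_mul (hb x t) ((hB x).trans (le_abs_self B)) (abs_nonneg _) hC
  refine ⟨|A| + C * |B| + 1, by positivity, fun x => zero_le_one.trans (one_le_barrier x),
    tendsto_barrier_cocompact, contDiff_barrier, fun x t ht htT => ?_⟩
  have h1 := one_le_barrier x
  nlinarith [hsecond x t ht.le htT, hfirst x t, mul_nonneg hC (abs_nonneg B), abs_nonneg A]

noncomputable def parabolicOp (a b c u : ℝ → ℝ → ℝ) (x t : ℝ) : ℝ :=
  deriv (fun τ => u x τ) t - a x t * deriv (deriv fun y => u y t) x
    + b x t * deriv (fun y => u y t) x + c x t * u x t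

theorem parabolicOp_neg (a b c u : ℝ → ℝ → ℝ) (x t : ℝ) :
    parabolicOp a b c (fun x t => -u x t) x t = -parabolicOp a b c u x t := by
  simp only [parabolicOp, deriv.fun_neg', deriv.fun_neg]
  ring

def ParabolicRegular (u : ℝ → ℝ → ℝ) (T : ℝ) : Prop :=
  ∀ x t, 0 < t → t ≤ T → DifferentiableAt ℝ (fun τ => u x τ) t ∧
    DifferentiableAt ℝ (fun y => u y t) x ∧ DifferentiableAt ℝ (deriv fun y => u y t) x

theorem ParabolicRegular.neg {u : ℝ → ℝ → ℝ} {T : ℝ} (hu : ParabolicRegular u T) :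
    ParabolicRegular (fun x t => -u x t) T := fun x t ht htT => by
  obtain ⟨hu_t, hu_x, hu_xx⟩ := hu x t ht htT
  exact ⟨hu_t.neg, hu_x.neg, by rw [deriv.fun_neg']; exact hu_xx.fun_neg⟩

noncomputable def comparisonFn (u : ℝ → ℝ → ℝ) (g : ℝ → ℝ) (a₀ M₀ F μ ε x t : ℝ) : ℝ :=
  u x t * exp (-(a₀ * t)) - (M₀ + F * t) - ε * exp (μ * t) * g x

theorem lt_parabolicOp_of_isMax_comparisonFn {a b c u : ℝ → ℝ → ℝ} {g : ℝ → ℝ}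
    {T a₀ M₀ F μ ε x₀ t₀ : ℝ} (ha₀ : 0 ≤ a₀) (hM₀ : 0 ≤ M₀) (hF : 0 ≤ F) (hε : 0 < ε)
    (ha : 0 ≤ a x₀ t₀) (hc : -a₀ ≤ c x₀ t₀) (hu : ParabolicRegular u T)
    (hg : IsParabolicBarrier a b T μ g)
    (ht₀ : 0 < t₀) (ht₀T : t₀ ≤ T) (hpos : 0 < comparisonFn u g a₀ M₀ F μ ε x₀ t₀)
    (hmax : ∀ x t, 0 ≤ t → t ≤ T →
      comparisonFn u g a₀ M₀ F μ ε x t ≤ comparisonFn u g a₀ M₀ F μ ε x₀ t₀) :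
    F < parabolicOp a b c u x₀ t₀ := by
  set w := comparisonFn u g a₀ M₀ F μ ε
  set E := exp (-(a₀ * t₀))
  set P := ε * exp (μ * t₀)
  have hwx : ∀ x, HasDerivAt (fun y => w y t₀)
      (deriv (fun y => u y t₀) x * E - P * deriv g x) x := fun x =>
    (((hu x t₀ ht₀ ht₀T).2.1.hasDerivAt.mul_const E).sub_const _).sub
      ((hg.contDiff.differentiable (by norm_num) x).hasDerivAt.const_mul P)
  have hwxx : HasDerivAt (fun x => deriv (fun y => u y t₀) x * E - P * deriv g x)
      (deriv (deriv fun y => u y t₀) x₀ * E - P * deriv (deriv g) x₀) x₀ :=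
    ((hu x₀ t₀ ht₀ ht₀T).2.2.hasDerivAt.mul_const E).sub
      ((hg.contDiff.differentiable_deriv_two x₀).hasDerivAt.const_mul P)
  have hwt : HasDerivAt (fun τ => w x₀ τ)
      (deriv (fun τ => u x₀ τ) t₀ * E - a₀ * (u x₀ t₀ * E) - F - μ * P * g x₀) t₀ := by
    refine (((hu x₀ t₀ ht₀ ht₀T).1.hasDerivAt.fun_mul
      ((hasDerivAt_id' t₀).const_mul a₀).fun_neg.exp).fun_sub
      (((hasDerivAt_id' t₀).const_mul F).const_add M₀)).fun_sub
      ((((hasDerivAt_id' t₀).const_mul μ).exp.const_mul ε).mul_const (g x₀)) |>.congr_deriv ?_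
    ring
  have hmax_x : IsLocalMax (fun y => w y t₀) x₀ :=
    (isMaxOn_univ_iff.2 fun x => hmax x t₀ ht₀.le ht₀T).isLocalMax univ_mem
  have hmax_t : IsLocalMaxOn (fun τ => w x₀ τ) (Iic t₀) t₀ :=
    mem_of_superset (Icc_mem_nhdsLE ht₀) fun τ hτ => hmax x₀ τ hτ.1 (hτ.2.trans ht₀T)
  have hux := hmax_x.hasDerivAt_eq_zero (hwx x₀)
  have huxx := hmax_x.hasDerivAt_hasDerivAt_nonpos (Eventually.of_forall hwx) hwxx
  have hut := hmax_t.hasDerivWithinAt_Iic_nonneg hwt.hasDerivWithinAt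
  have hE : 0 < E := exp_pos _
  have hE1 : E ≤ 1 := exp_le_one_iff.2 (neg_nonpos.2 (mul_nonneg ha₀ ht₀.le))
  have hP : 0 < P := by positivity
  have huE : 0 < u x₀ t₀ * E := by
    have : 0 ≤ P * g x₀ := mul_nonneg hP.le (hg.nonneg x₀)
    have : 0 ≤ F * t₀ := mul_nonneg hF ht₀.le
    simp only [w, comparisonFn] at hpos
    linarith
  by_contra! hL
  unfold parabolicOp at hL
  -- `E * (L u - F) ≥ (c + a₀) u E + P (μ g - a g'' + b g') + F (1 - E) > 0`
  nlinarith [mul_le_mul_of_nonneg_right hL hE.le, mul_nonpos_of_nonneg_of_nonpos ha huxx,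
    mul_lt_mul_of_pos_left (hg.lt x₀ t₀ ht₀ ht₀T) hP, congrArg (b x₀ t₀ * ·) hux,
    mul_nonneg (by linarith : 0 ≤ c x₀ t₀ + a₀) huE.le, mul_nonneg hF (sub_nonneg.2 hE1)]

theorem comparisonFn_nonpos {a b c u : ℝ → ℝ → ℝ} {g : ℝ → ℝ} {T a₀ M₀ F μ K ε : ℝ}
    (ha₀ : 0 ≤ a₀) (hM₀ : 0 ≤ M₀) (hF : 0 ≤ F) (hμ0 : 0 ≤ μ) (hε : 0 < ε)
    (ha : ∀ x t, 0 ≤ a x t) (hc : ∀ x t, -a₀ ≤ c x t)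
    (hu_cont : Continuous ↿u) (hu : ParabolicRegular u T) (hK : ∀ x t, u x t ≤ K)
    (hu0 : ∀ x, u x 0 ≤ M₀) (hLu : ∀ x t, 0 < t → t ≤ T → parabolicOp a b c u x t ≤ F)
    (hg : IsParabolicBarrier a b T μ g) :
    ∀ x t, 0 ≤ t → t ≤ T → comparisonFn u g a₀ M₀ F μ ε x t ≤ 0 := by
  obtain ⟨L, hL, hgL⟩ := mem_cocompact.1 (hg.tendsto_cocompact.eventually_ge_atTop ((|K| + 1) / ε))
  have hcont : Continuous ↿(comparisonFn u g a₀ M₀ F μ ε) := by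
    have : Continuous fun p : ℝ × ℝ => u p.1 p.2 := hu_cont
    have := hg.contDiff.continuous
    unfold comparisonFn
    fun_prop
  refine nonpos_on_strip_of_no_pos_max hcont hL (fun x hx t ht0 htT => ?_) (fun x => ?_)
    fun x₀ t₀ ht₀ ht₀T hpos hmax => ?_
  · have hE : exp (-(a₀ * t)) ≤ 1 := exp_le_one_iff.2 (neg_nonpos.2 (mul_nonneg ha₀ ht0))
    have huE : u x t * exp (-(a₀ * t)) ≤ |K| :=
      (mul_le_mul_of_nonneg_right ((hK x t).trans (le_abs_self K)) (exp_pos _).le).trans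
        (mul_le_of_le_one_right (abs_nonneg K) hE)
    have hgx : |K| + 1 ≤ ε * g x := (div_le_iff₀' hε).1 (hgL hx)
    have hexp : 1 ≤ exp (μ * t) := one_le_exp (mul_nonneg hμ0 ht0)
    have : ε * g x ≤ ε * exp (μ * t) * g x := by
      nlinarith [mul_nonneg hε.le (hg.nonneg x)]
    simp only [comparisonFn]
    nlinarith [mul_nonneg hF ht0]
  · simp only [comparisonFn, mul_zero, neg_zero, exp_zero, mul_one, add_zero]
    linarith [hu0 x, mul_nonneg hε.le (hg.nonneg x)]
  · exact (hLu x₀ t₀ ht₀ ht₀T).not_gt <| lt_parabolicOp_of_isMax_comparisonFn ha₀ hM₀ hF hε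
      (ha x₀ t₀) (hc x₀ t₀) hu hg ht₀ ht₀T hpos hmax

theorem le_of_parabolicOp_le {a b c u : ℝ → ℝ → ℝ} {g : ℝ → ℝ} {T a₀ M₀ F μ K : ℝ}
    (ha₀ : 0 ≤ a₀) (hM₀ : 0 ≤ M₀) (hF : 0 ≤ F) (hμ0 : 0 ≤ μ)
    (ha : ∀ x t, 0 ≤ a x t) (hc : ∀ x t, -a₀ ≤ c x t)
    (hu_cont : Continuous ↿u) (hu : ParabolicRegular u T) (hK : ∀ x t, u x t ≤ K)
    (hu0 : ∀ x, u x 0 ≤ M₀) (hLu : ∀ x t, 0 < t → t ≤ T → parabolicOp a b c u x t ≤ F)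
    (hg : IsParabolicBarrier a b T μ g)
    (x t : ℝ) (ht0 : 0 ≤ t) (htT : t ≤ T) :
    u x t ≤ (M₀ + F * t) * exp (a₀ * t) := by
  have hlim : Tendsto (fun ε => M₀ + F * t + ε * exp (μ * t) * g x) (𝓝[>] 0)
      (𝓝 (M₀ + F * t)) :=
    tendsto_nhdsWithin_of_tendsto_nhds <| (by fun_prop : Continuous fun ε : ℝ =>
      M₀ + F * t + ε * exp (μ * t) * g x).tendsto' 0 _ (by simp)
  have hbound : u x t * exp (-(a₀ * t)) ≤ M₀ + F * t := by
    refine ge_of_tendsto hlim (eventually_nhdsWithin_of_forall fun ε hε => ?_)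
    have := comparisonFn_nonpos ha₀ hM₀ hF hμ0 hε ha hc hu_cont hu hK hu0 hLu hg x t ht0 htT
    simp only [comparisonFn] at this
    linarith
  rwa [exp_neg, ← div_eq_mul_inv, div_le_iff₀ (exp_pos _)] at hbound

theorem abs_le_of_abs_parabolicOp_le {a b c u : ℝ → ℝ → ℝ} {g : ℝ → ℝ} {T a₀ M₀ F μ K : ℝ}
    (ha₀ : 0 ≤ a₀) (hF : 0 ≤ F) (hμ0 : 0 ≤ μ)
    (ha : ∀ x t, 0 ≤ a x t) (hc : ∀ x t, -a₀ ≤ c x t)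
    (hu_cont : Continuous ↿u) (hu : ParabolicRegular u T) (hK : ∀ x t, |u x t| ≤ K)
    (hu0 : ∀ x, |u x 0| ≤ M₀) (hLu : ∀ x t, 0 < t → t ≤ T → |parabolicOp a b c u x t| ≤ F)
    (hg : IsParabolicBarrier a b T μ g)
    (x t : ℝ) (ht0 : 0 ≤ t) (htT : t ≤ T) :
    |u x t| ≤ (M₀ + F * t) * exp (a₀ * t) := by
  have hM₀ : 0 ≤ M₀ := (abs_nonneg _).trans (hu0 0)
  refine abs_le.2 ⟨neg_le.1 ?_, ?_⟩
  · refine le_of_parabolicOp_le ha₀ hM₀ hF hμ0 ha hc hu_cont.neg hu.neg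
      (fun x t => (neg_le_abs _).trans (hK x t)) (fun x => (neg_le_abs _).trans (hu0 x))
      (fun x t ht htT => ?_) hg x t ht0 htT
    rw [parabolicOp_neg]
    exact (neg_le_abs _).trans (hLu x t ht htT)
  · exact le_of_parabolicOp_le ha₀ hM₀ hF hμ0 ha hc hu_cont hu
      (fun x t => (le_abs_self _).trans (hK x t)) (fun x => (le_abs_self _).trans (hu0 x))
      (fun x t ht htT => (le_abs_self _).trans (hLu x t ht htT)) hg x t ht0 htT

theorem parabolic_sup_bound_general (T a₀ C : ℝ) (ha₀ : 0 ≤ a₀)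
    (a b c f u : ℝ → ℝ → ℝ)
    (hacont : Continuous ↿a)
    (ha : ∀ x t : ℝ, 0 ≤ a x t)
    (hb : ∀ x t : ℝ, |b x t| ≤ C)
    (hc : ∀ x t : ℝ, -a₀ ≤ c x t)
    (hu_cont : Continuous ↿u)
    (hu_bdd : ∃ K : ℝ, ∀ x t : ℝ, |u x t| ≤ K)
    (hf_bdd : BddAbove (Set.range fun p : ℝ × ℝ => |f p.1 p.2|))
    (hu0_bdd : BddAbove (Set.range fun x : ℝ => |u x 0|))
    (hreg_t : ∀ x t : ℝ, 0 < t → t ≤ T → DifferentiableAt ℝ (fun τ => u x τ) t)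
    (hreg_x : ∀ x t : ℝ, 0 < t → t ≤ T →
      DifferentiableAt ℝ (fun y => u y t) x ∧
      DifferentiableAt ℝ (deriv fun y => u y t) x)
    (heq : ∀ x t : ℝ, 0 < t → t ≤ T →
      deriv (fun τ => u x τ) t
        - a x t * deriv (deriv fun y => u y t) x
        + b x t * deriv (fun y => u y t) x
        + c x t * u x t = f x t) :
    ∀ x t : ℝ, 0 ≤ t → t ≤ T →
      |u x t| ≤ ((⨆ y : ℝ, |u y 0|)
          + T * ⨆ p : ℝ × ℝ, |f p.1 p.2|) * Real.exp (a₀ * T) := by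
  intro x t ht0 htT
  obtain ⟨K, hK⟩ := hu_bdd
  obtain ⟨μ, hμ0, hbarrier⟩ := exists_isParabolicBarrier_barrier T hacont hb
  have hu0 : ∀ y, |u y 0| ≤ ⨆ y, |u y 0| := le_ciSup hu0_bdd
  have hf : ∀ y s, |f y s| ≤ ⨆ p : ℝ × ℝ, |f p.1 p.2| := fun y s => le_ciSup hf_bdd (y, s)
  have hF : 0 ≤ ⨆ p : ℝ × ℝ, |f p.1 p.2| := (abs_nonneg _).trans (hf 0 0)
  have hLu : ∀ y s, 0 < s → s ≤ T → |parabolicOp a b c u y s| ≤ ⨆ p : ℝ × ℝ, |f p.1 p.2| :=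
    fun y s hs hsT => (congrArg abs (heq y s hs hsT)).trans_le (hf y s)
  calc |u x t| ≤ _ := abs_le_of_abs_parabolicOp_le ha₀ hF hμ0 ha hc hu_cont
        (fun y s hs hsT => ⟨hreg_t y s hs hsT, hreg_x y s hs hsT⟩) hK hu0 hLu hbarrier x t ht0 htT
    _ ≤ _ := by
      rw [mul_comm _ t]
      gcongr
      exact add_nonneg ((abs_nonneg _).trans (hu0 0)) (mul_nonneg (ht0.trans htT) hF)

/-- Parabolic maximum-principle sup bound: for
`L(u) = u_t − a u_{xx} + b u_x + c u = f` on `ℝ × (0,T]` with `a ≥ 0`, `|b| ≤ C`,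
`c ≥ −a₀`, and `u` bounded and continuous on `ℝ × [0,T]`, one has
`sup |u| ≤ (sup_x |u(x,0)| + T·sup |f|)·exp(a₀T)`. -/
theorem parabolic_sup_bound (T a₀ C : ℝ) (hT : 0 < T) (ha₀ : 0 ≤ a₀) (hC : 0 ≤ C)
    (a b c f u : ℝ → ℝ → ℝ)
    (hacont : Continuous ↿a) (hbcont : Continuous ↿b) (hccont : Continuous ↿c)
    (ha : ∀ x t : ℝ, 0 ≤ a x t)
    (hb : ∀ x t : ℝ, |b x t| ≤ C)
    (hc : ∀ x t : ℝ, -a₀ ≤ c x t)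
    (hu_cont : Continuous ↿u)
    (hu_bdd : ∃ K : ℝ, ∀ x t : ℝ, |u x t| ≤ K)
    (hf_bdd : BddAbove (Set.range fun p : ℝ × ℝ => |f p.1 p.2|))
    (hu0_bdd : BddAbove (Set.range fun x : ℝ => |u x 0|))
    (hreg_t : ∀ x t : ℝ, 0 < t → t ≤ T → DifferentiableAt ℝ (fun τ => u x τ) t)
    (hreg_x : ∀ x t : ℝ, 0 < t → t ≤ T →
      DifferentiableAt ℝ (fun y => u y t) x ∧
      DifferentiableAt ℝ (deriv fun y => u y t) x)
    (heq : ∀ x t : ℝ, 0 < t → t ≤ T →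
      deriv (fun τ => u x τ) t
        - a x t * deriv (deriv fun y => u y t) x
        + b x t * deriv (fun y => u y t) x
        + c x t * u x t = f x t) :
    ∀ x t : ℝ, 0 ≤ t → t ≤ T →
      |u x t| ≤ ((⨆ y : ℝ, |u y 0|)
          + T * ⨆ p : ℝ × ℝ, |f p.1 p.2|) * Real.exp (a₀ * T) :=
  parabolic_sup_bound_general T a₀ C ha₀ a b c f u hacont ha hb hc hu_cont hu_bdd hf_bdd hu0_bdd
    hreg_t hreg_x heq
end
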